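/- arXiv:math/0212292 — 11 statements merged into one kernel-verified Lean document; each statement's English description precedes it below -/
import Mathlib

section
/- Let K₀ be a complex Hilbert space, let S be the unilateral shift on K := ℓ²(ℕ, K₀), let q be a real number with 0 < q < 1, and let Y be a bounded self-adjoint operator on K satisfying q²SY = YS. Then there exists a bounded self-adjoint operator Y₀ on K₀ such that Y(eₙ(ζ)) = q^{2n} eₙ(Y₀ζ) for all n ∈ ℕ and all ζ ∈ K₀. -/
/-!
Since `Y S = q² S Y`, the operator `Y` maps the range of `S` into itself, so the self-adjoint
`Y` also preserves its orthogonal complement, the copy `e₀(K₀)` of `K₀` in the zeroth slot.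
Hence `Y e₀(ζ) = e₀(Y₀ ζ)` for the compression `Y₀` of `Y` to that slot, which is self-adjoint,
and the relation `Y eₙ₊₁(ζ) = q² S Y eₙ(ζ)` propagates this to `Y eₙ(ζ) = q^(2n) eₙ(Y₀ ζ)`.
-/

open ContinuousLinearMap
open scoped InnerProductSpace

namespace lp

variable {𝕜 ι : Type*} [RCLike 𝕜] {G : ι → Type*} [∀ i, NormedAddCommGroup (G i)]
  [∀ i, InnerProductSpace 𝕜 (G i)] [∀ i, CompleteSpace (G i)] [DecidableEq ι]

theorem adjoint_evalCLM (i : ι) :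
    (evalCLM 𝕜 G 2 i).adjoint = singleContinuousLinearMap 𝕜 G 2 i :=
  ((eq_adjoint_iff _ _).mpr fun x f => inner_single_left i x f).symm

end lp

section UnilateralShift

variable {𝕜 E : Type*} [RCLike 𝕜] [NormedAddCommGroup E] [InnerProductSpace 𝕜 E]

def IsUnilateralShift (S : lp (fun _ : ℕ => E) 2 →L[𝕜] lp (fun _ : ℕ => E) 2) : Prop :=
  ∀ (n : ℕ) (ζ : E), S (lp.single 2 n ζ) = lp.single 2 (n + 1) ζ

namespace IsUnilateralShift

variable {S Y : lp (fun _ : ℕ => E) 2 →L[𝕜] lp (fun _ : ℕ => E) 2} {c : 𝕜}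

theorem apply_zero (hS : IsUnilateralShift S) (x : lp (fun _ : ℕ => E) 2) : S x 0 = 0 := by
  suffices lp.evalCLM 𝕜 (fun _ : ℕ => E) 2 0 ∘L S = 0 from congr($this x)
  refine lp.ext_continuousLinearMap ENNReal.ofNat_ne_top fun n => ?_
  ext ζ
  simp [lp.evalCLM, hS n ζ]

theorem apply_single_succ (hS : IsUnilateralShift S) (hrel : c • (S ∘L Y) = Y ∘L S)
    (n : ℕ) (ζ : E) : Y (lp.single 2 (n + 1) ζ) = c • S (Y (lp.single 2 n ζ)) := by
  rw [← hS, ← comp_apply, ← hrel, smul_apply, comp_apply]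

theorem apply_single_zero_apply_succ (hS : IsUnilateralShift S)
    (hY : (Y : lp (fun _ : ℕ => E) 2 →ₗ[𝕜] lp (fun _ : ℕ => E) 2).IsSymmetric)
    (hrel : c • (S ∘L Y) = Y ∘L S) (ζ : E) (k : ℕ) :
    Y (lp.single 2 0 ζ) (k + 1) = 0 := by
  set v := Y (lp.single 2 0 ζ) (k + 1)
  refine inner_self_eq_zero (𝕜 := 𝕜).mp ?_
  calc ⟪v, v⟫_𝕜 = ⟪Y (lp.single 2 0 ζ), lp.single 2 (k + 1) v⟫_𝕜 :=
        (lp.inner_single_right _ _ _).symm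
    _ = c * ⟪ζ, S (Y (lp.single 2 k v)) 0⟫_𝕜 := by
        rw [← coe_coe, hY, coe_coe, hS.apply_single_succ hrel, inner_smul_right,
          lp.inner_single_left]
    _ = 0 := by rw [hS.apply_zero, inner_zero_right, mul_zero]

theorem apply_single_zero (hS : IsUnilateralShift S)
    (hY : (Y : lp (fun _ : ℕ => E) 2 →ₗ[𝕜] lp (fun _ : ℕ => E) 2).IsSymmetric)
    (hrel : c • (S ∘L Y) = Y ∘L S) (ζ : E) :
    Y (lp.single 2 0 ζ) = lp.single 2 0 (Y (lp.single 2 0 ζ) 0) := by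
  ext (_ | k)
  · rw [lp.single_apply_self]
  · rw [hS.apply_single_zero_apply_succ hY hrel, lp.single_apply_ne _ _ _ k.succ_ne_zero]

theorem apply_single (hS : IsUnilateralShift S)
    (hY : (Y : lp (fun _ : ℕ => E) 2 →ₗ[𝕜] lp (fun _ : ℕ => E) 2).IsSymmetric)
    (hrel : c • (S ∘L Y) = Y ∘L S) (n : ℕ) (ζ : E) :
    Y (lp.single 2 n ζ) = c ^ n • lp.single 2 n (Y (lp.single 2 0 ζ) 0) := by
  induction n with
  | zero => rw [pow_zero, one_smul, ← hS.apply_single_zero hY hrel]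
  | succ n ih => rw [hS.apply_single_succ hrel, ih, map_smul, hS, smul_smul, pow_succ']

end IsUnilateralShift

end UnilateralShift

theorem shift_commutation_diagonalization_general
    {K₀ : Type*} [NormedAddCommGroup K₀] [InnerProductSpace ℂ K₀] [CompleteSpace K₀]
    (q : ℝ)
    (S Y : lp (fun _ : ℕ => K₀) 2 →L[ℂ] lp (fun _ : ℕ => K₀) 2)
    (hS : ∀ (n : ℕ) (ζ : K₀), S (lp.single 2 n ζ) = lp.single 2 (n + 1) ζ)
    (hY : IsSelfAdjoint Y)
    (hrel : ((q : ℂ) ^ 2) • (S ∘L Y) = Y ∘L S) :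
    ∃ Y₀ : K₀ →L[ℂ] K₀, IsSelfAdjoint Y₀ ∧
      ∀ (n : ℕ) (ζ : K₀),
        Y (lp.single 2 n ζ) = ((q : ℂ) ^ (2 * n)) • lp.single 2 n (Y₀ ζ) := by
  set P := lp.evalCLM ℂ (fun _ : ℕ => K₀) 2 0
  refine ⟨P ∘L Y ∘L P.adjoint, hY.conj_adjoint P, fun n ζ => ?_⟩
  rw [pow_mul, IsUnilateralShift.apply_single hS hY.isSymmetric hrel, lp.adjoint_evalCLM]
  rfl

/-- Let `S` be the unilateral shift on `ℓ²(ℕ, K₀)` (determined by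
`S (eₙ ζ) = eₙ₊₁ ζ`), let `0 < q < 1` and let `Y` be a bounded self-adjoint operator
satisfying `q² S Y = Y S`.  Then there is a bounded self-adjoint operator `Y₀` on `K₀`
such that `Y (eₙ ζ) = q^(2n) eₙ (Y₀ ζ)` for all `n` and `ζ`. -/
theorem shift_commutation_diagonalization
    {K₀ : Type*} [NormedAddCommGroup K₀] [InnerProductSpace ℂ K₀] [CompleteSpace K₀]
    (q : ℝ) (hq0 : 0 < q) (hq1 : q < 1)
    (S Y : lp (fun _ : ℕ => K₀) 2 →L[ℂ] lp (fun _ : ℕ => K₀) 2)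
    (hS : ∀ (n : ℕ) (ζ : K₀), S (lp.single 2 n ζ) = lp.single 2 (n + 1) ζ)
    (hY : IsSelfAdjoint Y)
    (hrel : ((q : ℂ) ^ 2) • (S ∘L Y) = Y ∘L S) :
    ∃ Y₀ : K₀ →L[ℂ] K₀, IsSelfAdjoint Y₀ ∧
      ∀ (n : ℕ) (ζ : K₀),
        Y (lp.single 2 n ζ) = ((q : ℂ) ^ (2 * n)) • lp.single 2 n (Y₀ ζ) :=
  shift_commutation_diagonalization_general q S Y hS hY hrel
end

section
/- Let H be a complex Hilbert space, let q and c be real numbers with 0 < q < 1 and c ≥ 0, and let X and Y be bounded operators on H with Y self-adjoint, ker Y = {0}, and X*X − q²XX* = (1 − q²)(Y² + c·1). Then ker X = {0}. -/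
/-!
Pairing the relation with `x` gives `‖X x‖² - q² ‖X* x‖² = (1 - q²)(‖Y x‖² + c ‖x‖²)`.
If `X x = 0` the left side is `≤ 0` while the right side is `≥ 0`, so `‖Y x‖ = 0`,
and `x = 0` because `Y` is injective.
-/

open ContinuousLinearMap

theorem norm_sq_sub_smul_norm_adjoint_sq_eq {𝕜 E : Type*} [RCLike 𝕜] [NormedAddCommGroup E]
    [InnerProductSpace 𝕜 E] [CompleteSpace E] {X Y : E →L[𝕜] E} (hY : IsSelfAdjoint Y)
    {a b c : ℝ} (hrel : adjoint X ∘L X - (a : 𝕜) • (X ∘L adjoint X)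
      = (b : 𝕜) • (Y ∘L Y + (c : 𝕜) • (1 : E →L[𝕜] E))) (x : E) :
    ‖X x‖ ^ 2 - a * ‖adjoint X x‖ ^ 2 = b * (‖Y x‖ ^ 2 + c * ‖x‖ ^ 2) := by
  have h := congrArg (fun T : E →L[𝕜] E => RCLike.re (inner 𝕜 (T x) x)) hrel
  have hXX : X ∘L adjoint X = adjoint (adjoint X) ∘L adjoint X := by rw [adjoint_adjoint]
  have hYY : Y ∘L Y = adjoint Y ∘L Y := by rw [hY.adjoint_eq]
  simp only [sub_apply, smul_apply, add_apply, one_apply_eq_self, inner_sub_left, inner_add_left,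
    inner_smul_left, map_sub, map_add, RCLike.conj_ofReal, RCLike.re_ofReal_mul] at h
  rw [hXX, hYY, ← apply_norm_sq_eq_inner_adjoint_left, ← apply_norm_sq_eq_inner_adjoint_left,
    ← apply_norm_sq_eq_inner_adjoint_left, inner_self_eq_norm_sq] at h
  exact h

/-- Let `0 < q < 1`, `c ≥ 0`, and let `X, Y` be bounded operators on a complex Hilbert
space `H` with `Y` self-adjoint, `ker Y = {0}` and
`X*X − q² X X* = (1 − q²)(Y² + c·1)`.  Then `ker X = {0}`. -/
theorem ker_X_trivial
    {H : Type*} [NormedAddCommGroup H] [InnerProductSpace ℂ H] [CompleteSpace H]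
    (q c : ℝ) (hq0 : 0 < q) (hq1 : q < 1) (hc : 0 ≤ c)
    (X Y : H →L[ℂ] H) (hY : IsSelfAdjoint Y) (hkerY : LinearMap.ker (Y : H →ₗ[ℂ] H) = ⊥)
    (hrel : adjoint X ∘L X - ((q : ℂ) ^ 2) • (X ∘L adjoint X)
      = ((1 : ℂ) - (q : ℂ) ^ 2) • (Y ∘L Y + (c : ℂ) • (1 : H →L[ℂ] H))) :
    LinearMap.ker (X : H →ₗ[ℂ] H) = ⊥ := by
  rw [LinearMap.ker_eq_bot']
  intro x (hXx : X x = 0)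
  have hnorm := norm_sq_sub_smul_norm_adjoint_sq_eq (a := q ^ 2) (b := 1 - q ^ 2) hY
    (by push_cast; exact hrel) x
  rw [hXx, norm_zero] at hnorm
  have hq : 0 < 1 - q ^ 2 := by nlinarith
  have hYx : ‖Y x‖ ^ 2 = 0 := by
    nlinarith [sq_nonneg ‖Y x‖, sq_nonneg ‖adjoint X x‖, mul_nonneg hc (sq_nonneg ‖x‖)]
  exact LinearMap.ker_eq_bot'.mp hkerY x (by simpa using hYx)
end

section
/- Let H be a complex Hilbert space, let q be a real number with 0 < q < 1, and let X and Y be bounded operators on H with Y self-adjoint, ker X = {0}, and YX = q²XY. Let |X| := (X*X)^{1/2} denote the positive square root of X*X, and suppose v is an isometry on H (v*v = 1) such that X = v|X|. Then Yv = q²vY. -/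
/-!
Twisted commutation `Y X = q² X Y` with `Y = Y*` also gives `X* Y = q² Y X*`, so `Y` commutes
with `X* X`, hence with its square root `T = |X|`. Then `Y v T = Y X = q² X Y = q² v T Y = q² v Y T`,
and since `T` is self-adjoint and injective (as `X = v T` is), its range is dense, so `Y v = q² v Y`.
-/

open ContinuousLinearMap

lemma commute_star_mul_self_of_mul_eq_smul {𝕜 A : Type*} [Field 𝕜] [StarRing 𝕜] [Ring A]
    [StarRing A] [Algebra 𝕜 A] [StarModule 𝕜 A] {c : 𝕜} (hc : c ≠ 0) (hc_star : star c = c)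
    {x y : A} (hy : IsSelfAdjoint y) (h : y * x = c • (x * y)) : Commute y (star x * x) := by
  have h_star : star x * y = c • (y * star x) := by
    simpa [hy.star_eq, hc_star] using congrArg star h
  refine smul_right_injective A hc ?_
  calc c • (y * (star x * x)) = c • (y * star x) * x := by rw [smul_mul_assoc, mul_assoc]
    _ = star x * (y * x) := by rw [← h_star, mul_assoc]
    _ = c • (star x * x * y) := by rw [h, mul_smul_comm, mul_assoc]

lemma IsStarNormal.denseRange_of_ker_eq_bot {𝕜 E : Type*} [RCLike 𝕜] [NormedAddCommGroup E]
    [InnerProductSpace 𝕜 E] [CompleteSpace E] {T : E →L[𝕜] E} (hT : IsStarNormal T)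
    (hker : T.ker = ⊥) : DenseRange T := by
  have h_orth : T.rangeᗮ = ⊥ := hker ▸ hT.orthogonal_range
  exact Submodule.dense_iff_topologicalClosure_eq_top.mpr
    (Submodule.topologicalClosure_eq_top_iff.mpr h_orth)

theorem polar_part_commutation_general
    {H : Type*} [NormedAddCommGroup H] [InnerProductSpace ℂ H] [CompleteSpace H]
    (q : ℝ) (hq0 : 0 < q)
    (X Y v T : H →L[ℂ] H)
    (hY : IsSelfAdjoint Y) (hkerX : LinearMap.ker (X : H →ₗ[ℂ] H) = ⊥)
    (hYX : Y ∘L X = ((q : ℂ) ^ 2) • (X ∘L Y))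
    (hTpos : T.IsPositive) (hTsq : T ∘L T = adjoint X ∘L X)
    (hpolar : X = v ∘L T) :
    Y ∘L v = ((q : ℂ) ^ 2) • (v ∘L Y) := by
  have hq2 : ((q : ℂ) ^ 2) ≠ 0 := pow_ne_zero 2 (Complex.ofReal_ne_zero.mpr hq0.ne')
  have hYT : Commute Y T := by
    have hsqrt : CFC.sqrt (star X * X) = T :=
      CFC.sqrt_unique hTsq ((nonneg_iff_isPositive T).mpr hTpos)
    rw [← hsqrt, CFC.sqrt_eq_cfc]
    exact ((commute_star_mul_self_of_mul_eq_smul hq2 (by simp [← Complex.ofReal_pow]) hY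
      hYX).symm.cfc_nnreal _).symm
  have hkerT : T.ker = ⊥ := eq_bot_iff.mpr (hkerX ▸ hpolar ▸ LinearMap.ker_le_ker_comp _ _)
  have hdense : DenseRange T := hTpos.isSelfAdjoint.isStarNormal.denseRange_of_ker_eq_bot hkerT
  have hcomp : (Y ∘L v) ∘L T = (((q : ℂ) ^ 2) • (v ∘L Y)) ∘L T :=
    calc (Y ∘L v) ∘L T = Y ∘L X := by rw [hpolar]; rfl
      _ = ((q : ℂ) ^ 2) • (v ∘L (T * Y)) := by rw [hYX, hpolar]; rfl
      _ = (((q : ℂ) ^ 2) • (v ∘L Y)) ∘L T := by rw [← hYT.eq]; rfl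
  exact DFunLike.coe_injective <|
    hdense.equalizer (map_continuous _) (map_continuous _) (congrArg DFunLike.coe hcomp)

/-- Let `0 < q < 1`, let `X, Y` be bounded operators on a complex Hilbert space `H` with
`Y` self-adjoint, `ker X = {0}` and `Y X = q² X Y`.  Let `T = |X| = (X*X)^{1/2}` be the
positive square root of `X*X` (encoded by `T ≥ 0` and `T² = X*X`) and suppose `v` is an
isometry (`v*v = 1`) with `X = v T` (polar decomposition).  Then `Y v = q² v Y`. -/
theorem polar_part_commutation
    {H : Type*} [NormedAddCommGroup H] [InnerProductSpace ℂ H] [CompleteSpace H]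
    (q : ℝ) (hq0 : 0 < q) (hq1 : q < 1)
    (X Y v T : H →L[ℂ] H)
    (hY : IsSelfAdjoint Y) (hkerX : LinearMap.ker (X : H →ₗ[ℂ] H) = ⊥)
    (hYX : Y ∘L X = ((q : ℂ) ^ 2) • (X ∘L Y))
    (hTpos : T.IsPositive) (hTsq : T ∘L T = adjoint X ∘L X)
    (hv : adjoint v ∘L v = 1) (hpolar : X = v ∘L T) :
    Y ∘L v = ((q : ℂ) ^ 2) • (v ∘L Y) :=
  polar_part_commutation_general q hq0 X Y v T hY hkerX hYX hTpos hTsq hpolar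
end

section
/- Let H be a complex Hilbert space, let q and c be real numbers with 0 < q < 1 and c ≥ 0, and let v, Y, P be bounded operators on H satisfying v*v = 1, Yv = q²vY, and P = q²vPv* + (1 − q²)(Y² + c·1). Then for every n ∈ ℕ: P vⁿ = vⁿ (q^{2n} P + (1 − q^{2n})(q^{2n+2} Y² + c·1)). -/
open ContinuousLinearMap

/-- Let `0 < q < 1`, `c ≥ 0` and let `v, Y, P` be bounded operators on a complex Hilbert
space `H` with `v*v = 1`, `Y v = q² v Y` and `P = q² v P v* + (1 − q²)(Y² + c·1)`.
Then for every `n : ℕ`,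
`P vⁿ = vⁿ (q^{2n} P + (1 − q^{2n})(q^{2n+2} Y² + c·1))`. -/
theorem P_shift_recursion
    {H : Type*} [NormedAddCommGroup H] [InnerProductSpace ℂ H] [CompleteSpace H]
    (q c : ℝ) (hq0 : 0 < q) (hq1 : q < 1) (hc : 0 ≤ c)
    (v Y P : H →L[ℂ] H)
    (hv : adjoint v ∘L v = 1)
    (hYv : Y ∘L v = ((q : ℂ) ^ 2) • (v ∘L Y))
    (hP : P = ((q : ℂ) ^ 2) • (v ∘L P ∘L adjoint v)
      + ((1 : ℂ) - (q : ℂ) ^ 2) • (Y ∘L Y + (c : ℂ) • (1 : H →L[ℂ] H))) :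
    ∀ n : ℕ, P ∘L (v ^ n)
      = (v ^ n) ∘L (((q : ℂ) ^ (2 * n)) • P
        + ((1 : ℂ) - (q : ℂ) ^ (2 * n)) • (((q : ℂ) ^ (2 * n + 2)) • (Y ∘L Y)
          + (c : ℂ) • (1 : H →L[ℂ] H))) := by
  have hY2v : (Y ∘L Y) ∘L v = ((q : ℂ) ^ 4) • (v ∘L (Y ∘L Y)) := by
    calc (Y ∘L Y) ∘L v = Y ∘L (Y ∘L v) := by rw [comp_assoc]
    _ = ((q : ℂ) ^ 2) • (Y ∘L (v ∘L Y)) := by rw [hYv, comp_smul]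
    _ = ((q : ℂ) ^ 2) • ((Y ∘L v) ∘L Y) := by rw [comp_assoc]
    _ = ((q : ℂ) ^ 4) • (v ∘L (Y ∘L Y)) := by
        rw [hYv, smul_comp, smul_smul, comp_assoc]; ring_nf
  have hPv : P ∘L v = v ∘L (((q : ℂ) ^ 2) • P
      + ((1 : ℂ) - (q : ℂ) ^ 2) • (((q : ℂ) ^ 4) • (Y ∘L Y)
        + (c : ℂ) • (1 : H →L[ℂ] H))) := by
    conv_lhs => rw [hP]
    simp only [add_comp, smul_comp, comp_assoc, hv, hY2v, comp_add, comp_smul,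
      one_def, comp_id, id_comp]
  intro n
  induction n with
  | zero => simp [one_def, comp_id, id_comp]
  | succ n ih =>
    rw [pow_succ, mul_def, ← comp_assoc, ih, comp_assoc, comp_assoc]
    congr 1
    simp only [add_comp, smul_comp, hPv, hY2v, comp_add, comp_smul,
      one_def, comp_id, id_comp]
    have h1 : (q : ℂ) ^ (2 * (n + 1)) = (q : ℂ) ^ (2 * n) * (q : ℂ) ^ 2 := by
      rw [← pow_add]; ring_nf
    have h2 : (q : ℂ) ^ (2 * (n + 1) + 2) = (q : ℂ) ^ (2 * n + 2) * (q : ℂ) ^ 2 := by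
      rw [← pow_add]; ring_nf
    have h3 : (q : ℂ) ^ (2 * n + 2) = (q : ℂ) ^ (2 * n) * (q : ℂ) ^ 2 := by
      rw [← pow_add]
    rw [h1, h2, h3]
    module
end

section
/- Let H be a complex Hilbert space, let q and c be real numbers with 0 < q < 1 and c ≥ 0. Suppose v is a unitary operator on H, Y is a bounded self-adjoint operator on H with ker Y = {0} and Yv = q²vY, and P is a bounded positive self-adjoint operator on H with P = q²vPv* + (1 − q²)(Y² + c·1). Then H = {0} (i.e., every vector of H is zero). -/
/-!
Write `f ξ = re ⟪P ξ, ξ⟫ ≥ 0` and `a ξ = ‖Y ξ‖²`. Evaluating the equation for `P` at `ξ` gives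
`f ξ ≥ q² f (v* ξ) + (1 - q²) a ξ`, while `Y ξ = q² v Y v* ξ` and `‖v‖ ≤ 1` give
`a ξ ≤ q² a (v* ξ)`. Each step of the descent along `v*` therefore gains a further
`(1 - q²) a ξ`, so `f ξ ≥ n (1 - q²) a ξ` for every `n`, forcing `Y ξ = 0`, hence `ξ = 0`.
-/

open ContinuousLinearMap

theorem nonpos_of_forall_nat_mul_le {x C : ℝ} (h : ∀ n : ℕ, n * x ≤ C) : x ≤ 0 := by
  by_contra! hx
  obtain ⟨n, hn⟩ := exists_nat_gt (C / x)
  have := h n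
  rw [div_lt_iff₀ hx] at hn
  linarith

theorem nonpos_of_le_weighted_shift {α : Type*} {f a : α → ℝ} {T : α → α} {r : ℝ}
    (hr0 : 0 ≤ r) (hr1 : r < 1) (hf : ∀ x, 0 ≤ f x)
    (hfT : ∀ x, r * f (T x) + (1 - r) * a x ≤ f x) (haT : ∀ x, a x ≤ r * a (T x)) (x : α) :
    a x ≤ 0 := by
  have growth : ∀ (n : ℕ) x, n * ((1 - r) * a x) ≤ f x := by
    intro n
    induction n with
    | zero => simpa using hf
    | succ n ih =>
      intro x
      have hn : 0 ≤ (n : ℝ) * (1 - r) := mul_nonneg n.cast_nonneg (by linarith)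
      calc ((n + 1 : ℕ) : ℝ) * ((1 - r) * a x)
          = n * (1 - r) * a x + (1 - r) * a x := by push_cast; ring
        _ ≤ n * (1 - r) * (r * a (T x)) + (1 - r) * a x := by gcongr; exact haT x
        _ = r * (n * ((1 - r) * a (T x))) + (1 - r) * a x := by ring
        _ ≤ r * f (T x) + (1 - r) * a x := by gcongr; exact ih (T x)
        _ ≤ f x := hfT x
  have := nonpos_of_forall_nat_mul_le (growth · x)
  exact nonpos_of_mul_nonpos_right this (by linarith)

section

variable {𝕜 E : Type*} [RCLike 𝕜] [NormedAddCommGroup E] [InnerProductSpace 𝕜 E] [CompleteSpace E]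

theorem norm_le_one_of_comp_adjoint_eq_one {v : E →L[𝕜] E} (hv : v ∘L adjoint v = 1) :
    ‖v‖ ≤ 1 := by
  have hnorm : ‖v‖ * ‖v‖ ≤ 1 := by
    rw [← CStarRing.norm_self_mul_star, star_eq_adjoint, mul_def, hv]
    exact norm_id_le
  nlinarith [norm_nonneg v]

theorem norm_apply_le_of_comp_eq_smul_comp {v Y : E →L[𝕜] E} {μ : 𝕜}
    (hv : v ∘L adjoint v = 1) (hYv : Y ∘L v = μ • (v ∘L Y)) (x : E) :
    ‖Y x‖ ≤ ‖μ‖ * ‖Y (adjoint v x)‖ := by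
  have hx : Y x = μ • v (Y (adjoint v x)) := by
    have h := congr($hYv (adjoint v x))
    rwa [comp_apply, ← comp_apply v, hv, one_apply_eq_self, smul_apply, comp_apply] at h
  rw [hx, norm_smul]
  gcongr
  exact (v.le_opNorm _).trans
    (mul_le_of_le_one_left (norm_nonneg _) (norm_le_one_of_comp_adjoint_eq_one hv))

theorem re_inner_apply_self_eq {v Y P : E →L[𝕜] E} {r c : ℝ} (hY : IsSelfAdjoint Y)
    (hP : P = (r : 𝕜) • (v ∘L P ∘L adjoint v) + (1 - (r : 𝕜)) • (Y ∘L Y + (c : 𝕜) • 1)) (x : E) :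
    RCLike.re (inner 𝕜 (P x) x) = r * RCLike.re (inner 𝕜 (P (adjoint v x)) (adjoint v x))
      + (1 - r) * (‖Y x‖ ^ 2 + c * ‖x‖ ^ 2) := by
  have hYY : RCLike.re (inner 𝕜 (Y (Y x)) x) = ‖Y x‖ ^ 2 := by
    rw [apply_norm_sq_eq_inner_adjoint_left, hY.adjoint_eq, comp_apply]
  have hvPv : inner 𝕜 (v (P (adjoint v x))) x = inner 𝕜 (P (adjoint v x)) (adjoint v x) :=
    (adjoint_inner_right v _ x).symm
  conv_lhs => rw [hP]
  simp only [add_apply, smul_apply, comp_apply, inner_add_left, inner_smul_left, hvPv, map_add,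
    RCLike.conj_ofReal]
  have hconj : (starRingEnd 𝕜) (1 - r) = ((1 - r : ℝ) : 𝕜) := by simp
  rw [hconj, RCLike.re_ofReal_mul, RCLike.re_ofReal_mul, map_add, hYY, RCLike.re_ofReal_mul,
    one_apply_eq_self, inner_self_eq_norm_sq]

end

theorem unitary_part_trivial_general
    {H : Type*} [NormedAddCommGroup H] [InnerProductSpace ℂ H] [CompleteSpace H]
    (q c : ℝ) (hq0 : 0 < q) (hq1 : q < 1) (hc : 0 ≤ c)
    (v Y P : H →L[ℂ] H)
    (hv' : v ∘L adjoint v = 1)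
    (hY : IsSelfAdjoint Y) (hkerY : LinearMap.ker (Y : H →ₗ[ℂ] H) = ⊥)
    (hYv : Y ∘L v = ((q : ℂ) ^ 2) • (v ∘L Y))
    (hPpos : P.IsPositive)
    (hP : P = ((q : ℂ) ^ 2) • (v ∘L P ∘L adjoint v)
      + ((1 : ℂ) - (q : ℂ) ^ 2) • (Y ∘L Y + (c : ℂ) • (1 : H →L[ℂ] H))) :
    ∀ ξ : H, ξ = 0 := by
  have hr0 : 0 ≤ q ^ 2 := sq_nonneg q
  have hr1 : q ^ 2 < 1 := by nlinarith
  have hP_step : ∀ ξ, q ^ 2 * RCLike.re (inner ℂ (P (adjoint v ξ)) (adjoint v ξ))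
      + (1 - q ^ 2) * ‖Y ξ‖ ^ 2 ≤ RCLike.re (inner ℂ (P ξ) ξ) := fun ξ => by
    rw [re_inner_apply_self_eq (r := q ^ 2) hY (by push_cast; exact hP) ξ]
    linarith [mul_nonneg (sub_nonneg.2 hr1.le) (mul_nonneg hc (sq_nonneg ‖ξ‖))]
  have hY_step : ∀ ξ, ‖Y ξ‖ ^ 2 ≤ q ^ 2 * ‖Y (adjoint v ξ)‖ ^ 2 := fun ξ => by
    have h := norm_apply_le_of_comp_eq_smul_comp hv' hYv ξ
    rw [norm_pow, Complex.norm_real, Real.norm_eq_abs, sq_abs] at h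
    calc ‖Y ξ‖ ^ 2 ≤ (q ^ 2 * ‖Y (adjoint v ξ)‖) ^ 2 := by gcongr
      _ = q ^ 2 * (q ^ 2 * ‖Y (adjoint v ξ)‖ ^ 2) := by ring
      _ ≤ q ^ 2 * ‖Y (adjoint v ξ)‖ ^ 2 := by gcongr; exact mul_le_of_le_one_left (sq_nonneg _) hr1.le
  intro ξ
  have hYξ : ‖Y ξ‖ ^ 2 ≤ 0 := nonpos_of_le_weighted_shift (a := fun ξ => ‖Y ξ‖ ^ 2) hr0 hr1
    hPpos.re_inner_nonneg_left hP_step hY_step ξ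
  have : ξ ∈ LinearMap.ker (Y : H →ₗ[ℂ] H) := by simpa using hYξ
  rwa [hkerY, Submodule.mem_bot] at this

/-- Let `0 < q < 1`, `c ≥ 0`.  Suppose `v` is unitary (`v*v = v v* = 1`), `Y` is bounded
self-adjoint with trivial kernel and `Y v = q² v Y`, and `P` is a bounded positive
self-adjoint operator with `P = q² v P v* + (1 − q²)(Y² + c·1)`.  Then `H = {0}`. -/
theorem unitary_part_trivial
    {H : Type*} [NormedAddCommGroup H] [InnerProductSpace ℂ H] [CompleteSpace H]
    (q c : ℝ) (hq0 : 0 < q) (hq1 : q < 1) (hc : 0 ≤ c)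
    (v Y P : H →L[ℂ] H)
    (hv : adjoint v ∘L v = 1) (hv' : v ∘L adjoint v = 1)
    (hY : IsSelfAdjoint Y) (hkerY : LinearMap.ker (Y : H →ₗ[ℂ] H) = ⊥)
    (hYv : Y ∘L v = ((q : ℂ) ^ 2) • (v ∘L Y))
    (hPpos : P.IsPositive)
    (hP : P = ((q : ℂ) ^ 2) • (v ∘L P ∘L adjoint v)
      + ((1 : ℂ) - (q : ℂ) ^ 2) • (Y ∘L Y + (c : ℂ) • (1 : H →L[ℂ] H))) :
    ∀ ξ : H, ξ = 0 :=
  unitary_part_trivial_general q c hq0 hq1 hc v Y P hv' hY hkerY hYv hPpos hP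
end

section
/- Let K₀ be a complex Hilbert space, let q and c be real numbers with 0 < q < 1 and c ≥ 0, and let Y₀ be a bounded self-adjoint operator on K₀. Then there exist bounded operators X and Y on ℓ²(ℕ, K₀), with Y self-adjoint, such that for all n ∈ ℕ and ζ ∈ K₀: X(eₙ(ζ)) = (1 − q^{2(n+1)})^{1/2} eₙ₊₁((q^{2n}Y₀² + c·1)^{1/2} ζ), Y(eₙ(ζ)) = q^{2n} eₙ(Y₀ζ), X*(e₀(ζ)) = 0, and X*(eₙ(ζ)) = (1 − q^{2n})^{1/2} eₙ₋₁((q^{2n−2}Y₀² + c·1)^{1/2} ζ) for n ≥ 1; and these operators satisfy the relations YX = q²XY, YX* = q^{−2}X*Y, and X*X − q²XX* = (1 − q²)(Y² + c·1). -/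
/-!
`X` is the weighted shift `eₙ(ζ) ↦ eₙ₊₁(rₙ Tₙ ζ)` with `rₙ = (1 - q^{2(n+1)})^{1/2}` and
`Tₙ = f_n(Y₀)` for `f_n(y) = (q^{2n} y² + c)^{1/2}` (continuous functional calculus), and `Y` is the
diagonal operator `diag(q^{2n} Y₀)`. The weights are uniformly bounded, so both are bounded; since
the weights are self-adjoint, `X*` is the diagonal part followed by the left shift. Each `Tₙ`
commutes with `Y₀`, being a function of it, so the three relations, checked on the total family of
vectors `eₙ(ζ)`, reduce to scalar identities; the last one is
`rₙ₊₁² (q^{2(n+1)} y² + c) - q² rₙ² (q^{2n} y² + c) = (1 - q²) (q^{4(n+1)} y² + c)`.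
-/

open ContinuousLinearMap
open scoped ENNReal

theorem BddAbove.range_norm_smul {ι 𝕜 F : Type*} [NormedField 𝕜] [SeminormedAddCommGroup F]
    [NormedSpace 𝕜 F] {r : ι → 𝕜} {B : ι → F} (hr : BddAbove (Set.range fun i => ‖r i‖))
    (hB : BddAbove (Set.range fun i => ‖B i‖)) : BddAbove (Set.range fun i => ‖r i • B i‖) := by
  obtain ⟨C, hC⟩ := hr
  obtain ⟨D, hD⟩ := hB
  refine ⟨C * D, Set.forall_mem_range.2 fun i => ?_⟩
  have hrC : ‖r i‖ ≤ C := hC ⟨i, rfl⟩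
  calc ‖r i • B i‖ ≤ ‖r i‖ * ‖B i‖ := norm_smul_le _ _
    _ ≤ C * D := mul_le_mul hrC (hD ⟨i, rfl⟩) (norm_nonneg _) ((norm_nonneg _).trans hrC)

namespace lp

noncomputable section

section Normed

variable {𝕜 ι E : Type*} [NontriviallyNormedField 𝕜] [NormedAddCommGroup E] [NormedSpace 𝕜 E]
  {p : ℝ≥0∞} [Fact (1 ≤ p)]

theorem ext_single {F : Type*} [AddCommMonoid F] [Module 𝕜 F] [TopologicalSpace F] [T2Space F]
    [DecidableEq ι] (hp : p ≠ ∞) {P Q : lp (fun _ : ι => E) p →L[𝕜] F}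
    (h : ∀ i x, P (lp.single p i x) = Q (lp.single p i x)) : P = Q :=
  lp.ext_continuousLinearMap hp fun i => ContinuousLinearMap.ext (h i)

variable (p) in
def diagonal (B : ι → E →L[𝕜] E) (hB : BddAbove (Set.range fun i => ‖B i‖)) :
    lp (fun _ : ι => E) p →L[𝕜] lp (fun _ : ι => E) p :=
  have hC : ∀ i, ‖B i‖ ≤ ⨆ i, ‖B i‖ := le_ciSup hB
  have hle (f : lp (fun _ : ι => E) p) (i : ι) : ‖B i (f i)‖ ≤ (⨆ i, ‖B i‖) * ‖f i‖ :=
    (B i).le_of_opNorm_le (hC i) _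
  LinearMap.mkContinuous
    { toFun f := ⟨fun i => B i (f i), ((lp.memℓp f).norm.const_mul _).mono (hle f)⟩
      map_add' f g := lp.ext <| funext fun i => map_add (B i) (f i) (g i)
      map_smul' a f := lp.ext <| funext fun i => map_smul (B i) a (f i) }
    (⨆ i, ‖B i‖)
    fun f => by
      have hp : p ≠ 0 := (zero_lt_one.trans_le Fact.out).ne'
      have hC₀ : 0 ≤ ⨆ i, ‖B i‖ := Real.iSup_nonneg fun i => norm_nonneg (B i)
      calc _ ≤ ‖(⨆ i, ‖B i‖) • lp.toNorm f‖ := lp.norm_mono hp fun i => by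
            simpa [lp.coeFn_smul, lp.toNorm, abs_of_nonneg hC₀] using hle f i
        _ = (⨆ i, ‖B i‖) * ‖f‖ := by
            rw [lp.norm_const_smul hp, lp.norm_toNorm, Real.norm_of_nonneg hC₀]

@[simp]
theorem diagonal_apply (B : ι → E →L[𝕜] E) (hB : BddAbove (Set.range fun i => ‖B i‖))
    (f : lp (fun _ : ι => E) p) (i : ι) : diagonal p B hB f i = B i (f i) := rfl

theorem diagonal_single [DecidableEq ι] (B : ι → E →L[𝕜] E)
    (hB : BddAbove (Set.range fun i => ‖B i‖)) (i : ι) (x : E) :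
    diagonal p B hB (lp.single p i x) = lp.single p i (B i x) :=
  lp.ext <| funext fun j => Pi.apply_single (fun j => B j) (fun j => map_zero (B j)) i x j

def shiftRight : lp (fun _ : ℕ => E) 2 →L[𝕜] lp (fun _ : ℕ => E) 2 :=
  have hp : 0 < (2 : ℝ≥0∞).toReal := by norm_num
  have hsum (f : lp (fun _ : ℕ => E) 2) :
      HasSum (fun n => ‖(fun | 0 => 0 | n + 1 => f n : ℕ → E) n‖ ^ (2 : ℝ≥0∞).toReal)
        (‖f‖ ^ (2 : ℝ≥0∞).toReal) := by
    refine (hasSum_nat_add_iff' 1).1 ?_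
    simpa [Real.zero_rpow hp.ne'] using lp.hasSum_norm hp f
  LinearMap.mkContinuous
    { toFun f := ⟨fun | 0 => 0 | n + 1 => f n, memℓp_gen (hsum f).summable⟩
      map_add' f g := lp.ext <| funext fun n => by
        cases n <;> simp only [lp.coeFn_add, Pi.add_apply, add_zero]
      map_smul' a f := lp.ext <| funext fun n => by
        cases n <;> simp only [lp.coeFn_smul, Pi.smul_apply, smul_zero, RingHom.id_apply] }
    1 fun f => by
      rw [one_mul]
      exact lp.norm_le_of_tsum_le hp (norm_nonneg f) (hsum f).tsum_eq.le

def shiftLeft : lp (fun _ : ℕ => E) 2 →L[𝕜] lp (fun _ : ℕ => E) 2 :=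
  have hp : 0 < (2 : ℝ≥0∞).toReal := by norm_num
  LinearMap.mkContinuous
    { toFun f := ⟨fun n => f (n + 1),
        memℓp_gen <| (summable_nat_add_iff 1).2 <| (lp.memℓp f).summable hp⟩
      map_add' f g := rfl
      map_smul' a f := rfl }
    1 fun f => by
      rw [one_mul]
      refine lp.norm_le_of_tsum_le hp (norm_nonneg f) ?_
      rw [lp.norm_rpow_eq_tsum hp, ((lp.memℓp f).summable hp).tsum_eq_zero_add]
      exact le_add_of_nonneg_left (by positivity)

@[simp] theorem shiftRight_apply_zero (f : lp (fun _ : ℕ => E) 2) :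
    shiftRight (𝕜 := 𝕜) f 0 = 0 := rfl

@[simp] theorem shiftRight_apply_succ (f : lp (fun _ : ℕ => E) 2) (n : ℕ) :
    shiftRight (𝕜 := 𝕜) f (n + 1) = f n := rfl

@[simp] theorem shiftLeft_apply (f : lp (fun _ : ℕ => E) 2) (n : ℕ) :
    shiftLeft (𝕜 := 𝕜) f n = f (n + 1) := rfl

theorem shiftRight_single (n : ℕ) (x : E) :
    shiftRight (𝕜 := 𝕜) (lp.single 2 n x) = lp.single 2 (n + 1) x :=
  lp.ext <| funext fun m => by cases m <;> simp [Pi.single_apply]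

theorem shiftLeft_single_zero (x : E) : shiftLeft (𝕜 := 𝕜) (lp.single 2 0 x) = 0 :=
  lp.ext <| funext fun m => by simp

theorem shiftLeft_single_succ (n : ℕ) (x : E) :
    shiftLeft (𝕜 := 𝕜) (lp.single 2 (n + 1) x) = lp.single 2 n x :=
  lp.ext <| funext fun m => by simp [Pi.single_apply]

def weightedShift (w : ℕ → E →L[𝕜] E) (hw : BddAbove (Set.range fun n => ‖w n‖)) :
    lp (fun _ : ℕ => E) 2 →L[𝕜] lp (fun _ : ℕ => E) 2 :=
  shiftRight ∘L diagonal 2 w hw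

theorem weightedShift_single (w : ℕ → E →L[𝕜] E) (hw : BddAbove (Set.range fun n => ‖w n‖))
    (n : ℕ) (x : E) : weightedShift w hw (lp.single 2 n x) = lp.single 2 (n + 1) (w n x) := by
  rw [weightedShift, comp_apply, diagonal_single, shiftRight_single]

end Normed

section Hilbert

variable {𝕜 ι E : Type*} [RCLike 𝕜] [NormedAddCommGroup E] [InnerProductSpace 𝕜 E]
  [CompleteSpace E]

theorem isSelfAdjoint_diagonal (B : ι → E →L[𝕜] E) (hB : BddAbove (Set.range fun i => ‖B i‖))
    (hB_sa : ∀ i, IsSelfAdjoint (B i)) : IsSelfAdjoint (diagonal 2 B hB) := by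
  refine ContinuousLinearMap.isSelfAdjoint_iff_isSymmetric.2 fun f g => ?_
  simp only [lp.inner_eq_tsum, coe_coe, diagonal_apply]
  exact tsum_congr fun i => (hB_sa i).isSymmetric (f i) (g i)

theorem adjoint_shiftRight : adjoint (shiftRight (𝕜 := 𝕜) (E := E)) = shiftLeft := by
  refine ((eq_adjoint_iff _ _).2 fun f g => ?_).symm
  rw [lp.inner_eq_tsum, lp.inner_eq_tsum,
    (lp.summable_inner (𝕜 := 𝕜) f (shiftRight g)).tsum_eq_zero_add]
  simp

variable {w : ℕ → E →L[𝕜] E} (hw : BddAbove (Set.range fun n => ‖w n‖))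

theorem adjoint_weightedShift (hw_sa : ∀ n, IsSelfAdjoint (w n)) :
    adjoint (weightedShift w hw) = diagonal 2 w hw ∘L shiftLeft := by
  rw [weightedShift, adjoint_comp, adjoint_shiftRight,
    (isSelfAdjoint_diagonal w hw hw_sa).adjoint_eq]

theorem adjoint_weightedShift_single_zero (hw_sa : ∀ n, IsSelfAdjoint (w n)) (x : E) :
    adjoint (weightedShift w hw) (lp.single 2 0 x) = 0 := by
  rw [adjoint_weightedShift hw hw_sa, comp_apply, shiftLeft_single_zero, map_zero]

theorem adjoint_weightedShift_single_succ (hw_sa : ∀ n, IsSelfAdjoint (w n)) (n : ℕ) (x : E) :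
    adjoint (weightedShift w hw) (lp.single 2 (n + 1) x) = lp.single 2 n (w n x) := by
  rw [adjoint_weightedShift hw hw_sa, comp_apply, shiftLeft_single_succ, diagonal_single]

theorem exists_weightedShift {T : ℕ → E →L[𝕜] E} (hT : ∀ n, IsSelfAdjoint (T n))
    (hT_bdd : BddAbove (Set.range fun n => ‖T n‖)) {r : ℕ → ℝ}
    (hr : BddAbove (Set.range fun n => |r n|)) :
    ∃ X : lp (fun _ : ℕ => E) 2 →L[𝕜] lp (fun _ : ℕ => E) 2,
      (∀ n x, X (lp.single 2 n x) = (r n : 𝕜) • lp.single 2 (n + 1) (T n x)) ∧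
      (∀ x, adjoint X (lp.single 2 0 x) = 0) ∧
      (∀ n x, adjoint X (lp.single 2 (n + 1) x) = (r n : 𝕜) • lp.single 2 n (T n x)) := by
  have hr' : BddAbove (Set.range fun n => ‖(r n : 𝕜)‖) := by
    simp_rw [RCLike.norm_ofReal]
    exact hr
  have hw : BddAbove (Set.range fun n => ‖(r n : 𝕜) • T n‖) := hr'.range_norm_smul hT_bdd
  have hw_sa (n : ℕ) : IsSelfAdjoint ((r n : 𝕜) • T n) :=
    IsSelfAdjoint.smul (RCLike.conj_ofReal _) (hT n)
  refine ⟨weightedShift _ hw, fun n x => ?_, adjoint_weightedShift_single_zero hw hw_sa,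
    fun n x => ?_⟩
  · rw [weightedShift_single, smul_apply, lp.single_smul]
  · rw [adjoint_weightedShift_single_succ hw hw_sa, smul_apply, lp.single_smul]

end Hilbert

end

end lp

section SqrtQuadratic

variable {A : Type*} [CStarAlgebra A] {a : A} {t c : ℝ}

theorem cfc_sqrt_quadratic_nonneg [PartialOrder A] [StarOrderedRing A] :
    0 ≤ cfc (fun x : ℝ => √(t * x ^ 2 + c)) a :=
  cfc_nonneg fun _ _ => Real.sqrt_nonneg _

theorem commute_cfc_sqrt_quadratic (ha : IsSelfAdjoint a) :
    Commute a (cfc (fun x : ℝ => √(t * x ^ 2 + c)) a) := by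
  simpa only [cfc_id' ℝ a] using cfc_commute_cfc (fun x : ℝ => x) _ a

theorem cfc_sqrt_quadratic_mul_self (ha : IsSelfAdjoint a) (ht : 0 ≤ t) (hc : 0 ≤ c) :
    cfc (fun x : ℝ => √(t * x ^ 2 + c)) a * cfc (fun x : ℝ => √(t * x ^ 2 + c)) a
      = (t : ℂ) • (a * a) + (c : ℂ) • 1 := by
  rw [← cfc_mul .., cfc_congr fun x _ => Real.mul_self_sqrt (by positivity : 0 ≤ t * x ^ 2 + c),
    cfc_add .., cfc_const_mul .., cfc_pow_id a 2, cfc_const c a, sq,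
    Algebra.algebraMap_eq_smul_one, Complex.coe_smul, Complex.coe_smul]

theorem norm_cfc_sqrt_quadratic_le (ha : IsSelfAdjoint a) (ht : 0 ≤ t) (hc : 0 ≤ c) :
    ‖cfc (fun x : ℝ => √(t * x ^ 2 + c)) a‖ ≤ √(t * ‖a‖ ^ 2 + c * ‖(1 : A)‖) := by
  refine Real.le_sqrt_of_sq_le ?_
  rw [← (cfc_predicate (fun x : ℝ => √(t * x ^ 2 + c)) a).norm_mul_self,
    cfc_sqrt_quadratic_mul_self ha ht hc]
  calc _ ≤ ‖(t : ℂ) • (a * a)‖ + ‖(c : ℂ) • (1 : A)‖ := norm_add_le _ _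
    _ ≤ t * ‖a‖ ^ 2 + c * ‖(1 : A)‖ := by
      rw [norm_smul, norm_smul, Complex.norm_real, Complex.norm_real, Real.norm_of_nonneg ht,
        Real.norm_of_nonneg hc, sq]
      gcongr
      exact norm_mul_le a a

theorem exists_commuting_sqrt_quadratic [PartialOrder A] [StarOrderedRing A] (ha : IsSelfAdjoint a)
    (hc : 0 ≤ c) {t : ℕ → ℝ} (ht : ∀ n, 0 ≤ t n ∧ t n ≤ 1) :
    ∃ T : ℕ → A, (∀ n, 0 ≤ T n ∧ T n * T n = (t n : ℂ) • (a * a) + (c : ℂ) • 1 ∧ Commute a (T n))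
      ∧ BddAbove (Set.range fun n => ‖T n‖) := by
  refine ⟨fun n => cfc (fun x : ℝ => √(t n * x ^ 2 + c)) a, fun n => ⟨cfc_sqrt_quadratic_nonneg,
    cfc_sqrt_quadratic_mul_self ha (ht n).1 hc, commute_cfc_sqrt_quadratic ha⟩,
    √(‖a‖ ^ 2 + c * ‖(1 : A)‖), Set.forall_mem_range.2 fun n => ?_⟩
  refine (norm_cfc_sqrt_quadratic_le ha (ht n).1 hc).trans (Real.sqrt_le_sqrt ?_)
  gcongr
  exact mul_le_of_le_one_left (by positivity) (ht n).2

end SqrtQuadratic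

namespace YcRelations

variable {E : Type*} [NormedAddCommGroup E] [NormedSpace ℂ E] {q c : ℝ} {Y₀ : E →L[ℂ] E}
  {T : ℕ → E →L[ℂ] E} {X X' Y : lp (fun _ : ℕ => E) 2 →L[ℂ] lp (fun _ : ℕ => E) 2}
  (hY : ∀ n ζ, Y (lp.single 2 n ζ) = ((q : ℂ) ^ (2 * n)) • lp.single 2 n (Y₀ ζ))
  (hX : ∀ n ζ, X (lp.single 2 n ζ)
    = ((√(1 - q ^ (2 * (n + 1))) : ℝ) : ℂ) • lp.single 2 (n + 1) (T n ζ))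
  (hX'₀ : ∀ ζ, X' (lp.single 2 0 ζ) = 0)
  (hX' : ∀ n ζ, X' (lp.single 2 (n + 1) ζ)
    = ((√(1 - q ^ (2 * (n + 1))) : ℝ) : ℂ) • lp.single 2 n (T n ζ))
include hY

include hX in
theorem y_comp_x (hTY : ∀ n, Commute Y₀ (T n)) : Y ∘L X = ((q : ℂ) ^ 2) • (X ∘L Y) := by
  refine lp.ext_single ENNReal.ofNat_ne_top fun n ζ => ?_
  have hζ : Y₀ (T n ζ) = T n (Y₀ ζ) := congr($((hTY n).eq) ζ)
  simp only [comp_apply, smul_apply, hX, hY, map_smul, smul_smul, hζ]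
  congr 1
  ring

include hX'₀ hX' in
theorem y_comp_x' (hq : q ≠ 0) (hTY : ∀ n, Commute Y₀ (T n)) :
    Y ∘L X' = ((q : ℂ) ^ 2)⁻¹ • (X' ∘L Y) := by
  refine lp.ext_single ENNReal.ofNat_ne_top fun n ζ => ?_
  cases n with
  | zero => simp only [comp_apply, smul_apply, hY, hX'₀, map_smul, map_zero, smul_zero]
  | succ n =>
    have hζ : Y₀ (T n ζ) = T n (Y₀ ζ) := congr($((hTY n).eq) ζ)
    simp only [comp_apply, smul_apply, hX', hY, map_smul, smul_smul, hζ]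
    have hq' : (q : ℂ) ≠ 0 := Complex.ofReal_ne_zero.2 hq
    congr 1
    field_simp
    ring

include hX hX'₀ hX' in
theorem x'_comp_x_sub (hq : q ^ 2 ≤ 1)
    (hT : ∀ n, T n * T n = ((q : ℂ) ^ (2 * n)) • (Y₀ * Y₀) + (c : ℂ) • 1) :
    X' ∘L X - ((q : ℂ) ^ 2) • (X ∘L X')
      = ((1 : ℂ) - (q : ℂ) ^ 2) • (Y ∘L Y + (c : ℂ) • 1) := by
  have hr (n : ℕ) : ((√(1 - q ^ (2 * (n + 1))) : ℝ) : ℂ) * ((√(1 - q ^ (2 * (n + 1))) : ℝ) : ℂ)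
      = 1 - (q : ℂ) ^ (2 * (n + 1)) := by
    have : q ^ (2 * (n + 1)) ≤ 1 := by rw [pow_mul]; exact pow_le_one₀ (sq_nonneg q) hq
    rw [← Complex.ofReal_mul, Real.mul_self_sqrt (by linarith)]
    push_cast; ring
  have hTζ (n : ℕ) (ζ : E) : T n (T n ζ) = ((q : ℂ) ^ (2 * n)) • Y₀ (Y₀ ζ) + (c : ℂ) • ζ := by
    simpa using congr($(hT n) ζ)
  refine lp.ext_single ENNReal.ofNat_ne_top fun n ζ => ?_
  cases n with
  | zero =>
    simp only [sub_apply, comp_apply, smul_apply, add_apply, one_apply_eq_self, hX, hX', hX'₀,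
      hY, map_smul, map_zero, smul_zero, sub_zero, hTζ, lp.single_add, lp.single_smul]
    match_scalars
    · linear_combination hr 0
    · linear_combination (c : ℂ) * hr 0
  | succ n =>
    simp only [sub_apply, comp_apply, smul_apply, add_apply, one_apply_eq_self, hX, hX',
      hY, map_smul, hTζ, lp.single_add, lp.single_smul]
    match_scalars
    · linear_combination
        (q : ℂ) ^ (2 * (n + 1)) * hr (n + 1) - (q : ℂ) ^ 2 * (q : ℂ) ^ (2 * n) * hr n
    · linear_combination (c : ℂ) * hr (n + 1) - (q : ℂ) ^ 2 * (c : ℂ) * hr n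

end YcRelations

/-- Conversely, given `0 < q < 1`, `c ≥ 0` and a bounded self-adjoint operator `Y₀` on a
complex Hilbert space `K₀`, there exist bounded operators `X, Y` on `ℓ²(ℕ, K₀)` with `Y`
self-adjoint, acting by
`X (eₙ ζ) = (1 − q^{2(n+1)})^{1/2} eₙ₊₁ ((q^{2n} Y₀² + c·1)^{1/2} ζ)`,
`Y (eₙ ζ) = q^{2n} eₙ (Y₀ ζ)`,
`X* (e₀ ζ) = 0`, `X* (eₙ ζ) = (1 − q^{2n})^{1/2} eₙ₋₁ ((q^{2n−2} Y₀² + c·1)^{1/2} ζ)`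
for `n ≥ 1`, and satisfying `Y X = q² X Y`, `Y X* = q⁻² X* Y` and
`X*X − q² X X* = (1 − q²)(Y² + c·1)`.  The positive square roots
`(q^{2n} Y₀² + c·1)^{1/2}` are encoded as the (unique) positive operators `T n` with
`(T n)² = q^{2n} Y₀² + c·1`. -/
theorem Yc_representation_exists
    {K₀ : Type*} [NormedAddCommGroup K₀] [InnerProductSpace ℂ K₀] [CompleteSpace K₀]
    (q c : ℝ) (hq0 : 0 < q) (hq1 : q < 1) (hc : 0 ≤ c)
    (Y₀ : K₀ →L[ℂ] K₀) (hY₀ : IsSelfAdjoint Y₀) :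
    ∃ (T : ℕ → (K₀ →L[ℂ] K₀))
      (X Y : lp (fun _ : ℕ => K₀) 2 →L[ℂ] lp (fun _ : ℕ => K₀) 2),
      (∀ n : ℕ, (T n).IsPositive ∧
        T n ∘L T n = ((q : ℂ) ^ (2 * n)) • (Y₀ ∘L Y₀) + (c : ℂ) • (1 : K₀ →L[ℂ] K₀)) ∧
      IsSelfAdjoint Y ∧
      (∀ (n : ℕ) (ζ : K₀),
        X (lp.single 2 n ζ)
          = ((Real.sqrt (1 - q ^ (2 * (n + 1))) : ℝ) : ℂ) • lp.single 2 (n + 1) (T n ζ)) ∧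
      (∀ (n : ℕ) (ζ : K₀),
        Y (lp.single 2 n ζ) = ((q : ℂ) ^ (2 * n)) • lp.single 2 n (Y₀ ζ)) ∧
      (∀ ζ : K₀, adjoint X (lp.single 2 0 ζ) = 0) ∧
      (∀ (n : ℕ) (ζ : K₀),
        adjoint X (lp.single 2 (n + 1) ζ)
          = ((Real.sqrt (1 - q ^ (2 * (n + 1))) : ℝ) : ℂ) • lp.single 2 n (T n ζ)) ∧
      Y ∘L X = ((q : ℂ) ^ 2) • (X ∘L Y) ∧
      Y ∘L adjoint X = ((q : ℂ) ^ 2)⁻¹ • (adjoint X ∘L Y) ∧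
      adjoint X ∘L X - ((q : ℂ) ^ 2) • (X ∘L adjoint X)
        = ((1 : ℂ) - (q : ℂ) ^ 2) • (Y ∘L Y
          + (c : ℂ) • (1 : lp (fun _ : ℕ => K₀) 2 →L[ℂ] lp (fun _ : ℕ => K₀) 2)) := by
  have hq_pow (n : ℕ) : q ^ n ≤ 1 := pow_le_one₀ hq0.le hq1.le
  obtain ⟨T, hT, hT_bdd⟩ := exists_commuting_sqrt_quadratic hY₀ hc
    (t := fun n => q ^ (2 * n)) fun n => ⟨by positivity, hq_pow _⟩
  have hT_sq (n : ℕ) : T n * T n = ((q : ℂ) ^ (2 * n)) • (Y₀ * Y₀) + (c : ℂ) • 1 := by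
    simpa using (hT n).2.1
  obtain ⟨X, hX, hX'₀, hX'⟩ := lp.exists_weightedShift (fun n => (hT n).1.isSelfAdjoint) hT_bdd
    (r := fun n => √(1 - q ^ (2 * (n + 1)))) ⟨1, Set.forall_mem_range.2 fun n => by
      rw [abs_of_nonneg (Real.sqrt_nonneg _), Real.sqrt_le_one]
      linarith [pow_nonneg hq0.le (2 * (n + 1))]⟩
  have hY_bdd : BddAbove (Set.range fun n => ‖(q : ℂ) ^ (2 * n) • Y₀‖) :=
    BddAbove.range_norm_smul ⟨1, Set.forall_mem_range.2 fun n => by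
      simpa [abs_of_pos hq0] using hq_pow (2 * n)⟩ (by simp)
  have hY (n : ℕ) (ζ : K₀) : lp.diagonal 2 _ hY_bdd (lp.single 2 n ζ)
      = ((q : ℂ) ^ (2 * n)) • lp.single 2 n (Y₀ ζ) := by
    rw [lp.diagonal_single, smul_apply, lp.single_smul]
  refine ⟨T, X, _, fun n => ⟨(nonneg_iff_isPositive _).1 (hT n).1, hT_sq n⟩,
    lp.isSelfAdjoint_diagonal _ hY_bdd fun n =>
      IsSelfAdjoint.smul (IsSelfAdjoint.pow (Complex.conj_ofReal q) _) hY₀,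
    hX, hY, hX'₀, hX', YcRelations.y_comp_x hY hX fun n => (hT n).2.2,
    YcRelations.y_comp_x' hY hX'₀ hX' hq0.ne' fun n => (hT n).2.2,
    YcRelations.x'_comp_x_sub hY hX hX'₀ hX' (hq_pow 2) hT_sq⟩
end

section
/- Let q and c be real numbers with 0 < q < 1 and c ≥ 0, and set λ := q − q^{−1}. Let R be a unital associative ℂ-algebra containing elements a, a′, b, b′, X, X′, Y, Y′ such that: aa′ = a′a = 1; YY′ = Y′Y = 1; each of X, X′, Y, Y′ commutes with each of a, a′, b, b′; ab = q^{−2} ba; ab′ = q² b′a; b′b = a − a² + c; bb′ = q²a − q⁴a² + c; YX = q²XY; YX′ = q^{−2}X′Y; and X′X − q²XX′ = (1 − q²)(Y² + c). Define f := q^{−1/2} λ^{−1} (X − qb) a′, e := q^{1/2} λ^{−1} (X′ − q^{−1} b′) Y′, k := q Y′ a, and k′ := q^{−1} a′ Y. Then kk′ = k′k = 1, ke = q² ek, kf = q^{−2} fk, and ef − fe = λ^{−1}(k − k′). -/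
set_option maxHeartbeats 2000000
/-- Alternative presentation of `Ô(S²_{qc}) ⋊ U′_q(su₂)`: given the two commuting sets of
generators `a, a′, b, b′` and `X, X′, Y, Y′` with the listed relations, the elements
`f = q^{−1/2} λ⁻¹ (X − q b) a′`, `e = q^{1/2} λ⁻¹ (X′ − q⁻¹ b′) Y′`, `k = q Y′ a`,
`k′ = q⁻¹ a′ Y` (where `λ = q − q⁻¹`) satisfy the `U′_q(su₂)` relations
`k k′ = k′ k = 1`, `k e = q² e k`, `k f = q⁻² f k`, `e f − f e = λ⁻¹ (k − k′)`. -/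
theorem decoupled_presentation_uqprime_relations
    (q c : ℝ) (hq0 : 0 < q) (hq1 : q < 1) (hc : 0 ≤ c)
    {R : Type*} [Ring R] [Algebra ℂ R]
    (a a' b b' X X' Y Y' : R)
    (h1 : a * a' = 1) (h2 : a' * a = 1)
    (h3 : Y * Y' = 1) (h4 : Y' * Y = 1)
    (hcomm : ∀ u ∈ ({X, X', Y, Y'} : Set R), ∀ w ∈ ({a, a', b, b'} : Set R),
      u * w = w * u)
    (h5 : a * b = (((q : ℂ) ^ 2)⁻¹) • (b * a))
    (h6 : a * b' = ((q : ℂ) ^ 2) • (b' * a))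
    (h7 : b' * b = a - a ^ 2 + (c : ℂ) • (1 : R))
    (h8 : b * b' = ((q : ℂ) ^ 2) • a - ((q : ℂ) ^ 4) • a ^ 2 + (c : ℂ) • (1 : R))
    (h9 : Y * X = ((q : ℂ) ^ 2) • (X * Y))
    (h10 : Y * X' = (((q : ℂ) ^ 2)⁻¹) • (X' * Y))
    (h11 : X' * X - ((q : ℂ) ^ 2) • (X * X')
      = ((1 - q ^ 2 : ℝ) : ℂ) • (Y ^ 2 + (c : ℂ) • (1 : R)))
    (e f k k' : R)
    (hf : f = ((q ^ (-(1 : ℝ) / 2) * (q - q⁻¹)⁻¹ : ℝ) : ℂ) • ((X - (q : ℂ) • b) * a'))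
    (he : e = ((q ^ ((1 : ℝ) / 2) * (q - q⁻¹)⁻¹ : ℝ) : ℂ) • ((X' - ((q : ℂ))⁻¹ • b') * Y'))
    (hk : k = (q : ℂ) • (Y' * a))
    (hk' : k' = ((q : ℂ))⁻¹ • (a' * Y)) :
    k * k' = 1 ∧ k' * k = 1 ∧
    k * e = ((q : ℂ) ^ 2) • (e * k) ∧
    k * f = (((q : ℂ) ^ 2)⁻¹) • (f * k) ∧
    e * f - f * e = (((q - q⁻¹)⁻¹ : ℝ) : ℂ) • (k - k') := by
  -- scalar nonvanishing facts
  have hqC : (q : ℂ) ≠ 0 := by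
    simpa using Complex.ofReal_ne_zero.mpr hq0.ne'
  have hq2C : ((q : ℂ) ^ 2) ≠ 0 := pow_ne_zero _ hqC
  have hq2iC : (((q : ℂ) ^ 2)⁻¹) ≠ 0 := inv_ne_zero hq2C
  have hLR : q - q⁻¹ ≠ 0 := by
    intro h
    have h1' : q * q⁻¹ = 1 := mul_inv_cancel₀ hq0.ne'
    have h2' : q⁻¹ = q := by linarith
    nlinarith [h1', h2']
  have hLC : (q : ℂ) - (q : ℂ)⁻¹ ≠ 0 := by
    have hh := Complex.ofReal_ne_zero.mpr hLR
    push_cast at hh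
    exact hh
  have hAC : ((q ^ ((1 : ℝ) / 2) : ℝ) : ℂ) ≠ 0 :=
    Complex.ofReal_ne_zero.mpr (Real.rpow_pos_of_pos hq0 _).ne'
  have hq2ne : ((q : ℂ) ^ 2 - 1) ≠ 0 := by
    have hr : (q ^ 2 - 1 : ℝ) ≠ 0 := by nlinarith
    have hh := Complex.ofReal_ne_zero.mpr hr
    push_cast at hh
    exact hh
  have hq2ne' : ((1 : ℂ) - (q : ℂ) ^ 2) ≠ 0 := by
    intro h; apply hq2ne; linear_combination -h
  have hq2ne'' : (-1 + (q : ℂ) ^ 2) ≠ 0 := by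
    intro h; apply hq2ne; linear_combination h

  have hrpR : q ^ (-(1 : ℝ) / 2) = (q ^ ((1 : ℝ) / 2))⁻¹ := by
    rw [show (-(1 : ℝ) / 2) = -((1 : ℝ) / 2) by norm_num, Real.rpow_neg hq0.le]
  rw [hrpR] at hf
  -- general helpers
  have swap : ∀ u w : R, u * w = w * u → ∀ t : R, u * (w * t) = w * (u * t) := by
    intro u w h t; rw [← mul_assoc, h, mul_assoc]
  have swapS : ∀ (s : ℂ) (u w : R), u * w = s • (w * u) → ∀ t : R,
      u * (w * t) = s • (w * (u * t)) := by
    intro s u w h t; rw [← mul_assoc, h, smul_mul_assoc, mul_assoc]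
  have cancel : ∀ p p' : R, p * p' = 1 → ∀ t : R, p * (p' * t) = t := by
    intro p p' h t; rw [← mul_assoc, h, one_mul]
  have conj : ∀ (p p' U : R) (s : ℂ), s ≠ 0 → p * p' = 1 → p' * p = 1 →
      p * U = s • (U * p) → p' * U = s⁻¹ • (U * p') := by
    intro p p' U s hs hpp hp'p h
    have key : U * p' = s • (p' * U) := by
      have e1 : p' * (p * U) * p' = U * p' := by rw [← mul_assoc, hp'p, one_mul]
      have e2 : p' * (p * U) * p' = s • (p' * U) := by
        rw [h, mul_smul_comm, smul_mul_assoc, mul_assoc, mul_assoc, hpp, mul_one]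
      rw [← e1, e2]
    rw [key, smul_smul, inv_mul_cancel₀ hs, one_smul]
  -- derived relations
  have rY'X : Y' * X = ((q : ℂ) ^ 2)⁻¹ • (X * Y') := conj Y Y' X _ hq2C h3 h4 h9
  have rY'X' : Y' * X' = ((q : ℂ) ^ 2) • (X' * Y') := by
    have hh := conj Y Y' X' _ hq2iC h3 h4 h10
    rwa [inv_inv] at hh
  have ra'b : a' * b = ((q : ℂ) ^ 2) • (b * a') := by
    have hh := conj a a' b _ hq2iC h1 h2 h5
    rwa [inv_inv] at hh
  have ra'b' : a' * b' = ((q : ℂ) ^ 2)⁻¹ • (b' * a') := conj a a' b' _ hq2C h1 h2 h6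
  have h11' : X' * X = ((q : ℂ) ^ 2) • (X * X')
      + ((1 - q ^ 2 : ℝ) : ℂ) • (Y ^ 2 + (c : ℂ) • (1 : R)) := by
    rw [← h11]; abel
  -- extended (right-associated) forms
  have eh5 := swapS _ _ _ h5
  have eh6 := swapS _ _ _ h6
  have eh9 := swapS _ _ _ h9
  have eh10 := swapS _ _ _ h10
  have erY'X := swapS _ _ _ rY'X
  have erY'X' := swapS _ _ _ rY'X'
  have era'b := swapS _ _ _ ra'b
  have era'b' := swapS _ _ _ ra'b'
  have c1 := cancel _ _ h1
  have c2 := cancel _ _ h2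
  have c3 := cancel _ _ h3
  have c4 := cancel _ _ h4
  have h7e : ∀ t : R, b' * (b * t) = (a - a ^ 2 + (c : ℂ) • (1 : R)) * t := by
    intro t; rw [← mul_assoc, h7]
  have h8e : ∀ t : R, b * (b' * t)
      = (((q : ℂ) ^ 2) • a - ((q : ℂ) ^ 4) • a ^ 2 + (c : ℂ) • (1 : R)) * t := by
    intro t; rw [← mul_assoc, h8]
  have h11e : ∀ t : R, X' * (X * t) = (((q : ℂ) ^ 2) • (X * X')
      + ((1 - q ^ 2 : ℝ) : ℂ) • (Y ^ 2 + (c : ℂ) • (1 : R))) * t := by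
    intro t; rw [← mul_assoc, h11']
  -- cross commutations
  have mX : X ∈ ({X, X', Y, Y'} : Set R) := by simp
  have mX' : X' ∈ ({X, X', Y, Y'} : Set R) := by simp
  have mY : Y ∈ ({X, X', Y, Y'} : Set R) := by simp
  have mY' : Y' ∈ ({X, X', Y, Y'} : Set R) := by simp
  have ma : a ∈ ({a, a', b, b'} : Set R) := by simp
  have ma' : a' ∈ ({a, a', b, b'} : Set R) := by simp
  have mb : b ∈ ({a, a', b, b'} : Set R) := by simp
  have mb' : b' ∈ ({a, a', b, b'} : Set R) := by simp
  have pXa := hcomm X mX a ma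
  have pXa' := hcomm X mX a' ma'
  have pXb := hcomm X mX b mb
  have pXb' := hcomm X mX b' mb'
  have pX'a := hcomm X' mX' a ma
  have pX'a' := hcomm X' mX' a' ma'
  have pX'b := hcomm X' mX' b mb
  have pX'b' := hcomm X' mX' b' mb'
  have pYa := hcomm Y mY a ma
  have pYa' := hcomm Y mY a' ma'
  have pYb := hcomm Y mY b mb
  have pYb' := hcomm Y mY b' mb'
  have pY'a := hcomm Y' mY' a ma
  have pY'a' := hcomm Y' mY' a' ma'
  have pY'b := hcomm Y' mY' b mb
  have pY'b' := hcomm Y' mY' b' mb'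
  have sXa := swap _ _ pXa
  have sXa' := swap _ _ pXa'
  have sXb := swap _ _ pXb
  have sXb' := swap _ _ pXb'
  have sX'a := swap _ _ pX'a
  have sX'a' := swap _ _ pX'a'
  have sX'b := swap _ _ pX'b
  have sX'b' := swap _ _ pX'b'
  have sYa := swap _ _ pYa
  have sYa' := swap _ _ pYa'
  have sYb := swap _ _ pYb
  have sYb' := swap _ _ pYb'
  have sY'a := swap _ _ pY'a
  have sY'a' := swap _ _ pY'a'
  have sY'b := swap _ _ pY'b
  have sY'b' := swap _ _ pY'b'
  have hM : (((q ^ ((1 : ℝ) / 2) : ℝ) : ℂ)) ^ 4 * ((q : ℂ)) ^ 30 ≠ 0 :=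
    mul_ne_zero (pow_ne_zero _ hAC) (pow_ne_zero _ hqC)
  have hqq : (q : ℂ) * (q : ℂ)⁻¹ = 1 := mul_inv_cancel₀ hqC
  have hAA : ((q ^ ((1 : ℝ) / 2) : ℝ) : ℂ) * ((q ^ ((1 : ℝ) / 2) : ℝ) : ℂ)⁻¹ = 1 :=
    mul_inv_cancel₀ hAC
  have hQQ : ((q : ℂ) * (q : ℂ)) * ((q : ℂ) * (q : ℂ))⁻¹ = 1 :=
    mul_inv_cancel₀ (mul_ne_zero hqC hqC)
  have hWW : ((q : ℂ) - (q : ℂ)⁻¹) * ((q : ℂ) - (q : ℂ)⁻¹)⁻¹ = 1 := mul_inv_cancel₀ hLC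
  subst hf he hk hk'
  refine ⟨?_, ?_, ?_, ?_, ?_⟩
  · simp only [pXa, pXa', pXb, pXb', pX'a, pX'a', pX'b, pX'b', pYa, pYa', pYb, pYb',
      pY'a, pY'a', pY'b, pY'b', sXa, sXa', sXb, sXb', sX'a, sX'a', sX'b, sX'b',
      sYa, sYa', sYb, sYb', sY'a, sY'a', sY'b, sY'b',
      h5, eh5, h6, eh6, h9, eh9, h10, eh10, rY'X, erY'X, rY'X', erY'X',
      ra'b, era'b, ra'b', era'b', h7, h7e, h8, h8e, h11', h11e,
      h1, h2, h3, h4, c1, c2, c3, c4,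
      mul_assoc, smul_mul_assoc, mul_smul_comm, smul_smul, smul_add, smul_sub,
      mul_add, add_mul, mul_sub, sub_mul, mul_one, one_mul, pow_two]
    match_scalars
    · push_cast
      linear_combination hqq
  · simp only [pXa, pXa', pXb, pXb', pX'a, pX'a', pX'b, pX'b', pYa, pYa', pYb, pYb',
      pY'a, pY'a', pY'b, pY'b', sXa, sXa', sXb, sXb', sX'a, sX'a', sX'b, sX'b',
      sYa, sYa', sYb, sYb', sY'a, sY'a', sY'b, sY'b',
      h5, eh5, h6, eh6, h9, eh9, h10, eh10, rY'X, erY'X, rY'X', erY'X',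
      ra'b, era'b, ra'b', era'b', h7, h7e, h8, h8e, h11', h11e,
      h1, h2, h3, h4, c1, c2, c3, c4,
      mul_assoc, smul_mul_assoc, mul_smul_comm, smul_smul, smul_add, smul_sub,
      mul_add, add_mul, mul_sub, sub_mul, mul_one, one_mul, pow_two]
    match_scalars
    · push_cast
      linear_combination hqq
  · simp only [pXa, pXa', pXb, pXb', pX'a, pX'a', pX'b, pX'b', pYa, pYa', pYb, pYb',
      pY'a, pY'a', pY'b, pY'b', sXa, sXa', sXb, sXb', sX'a, sX'a', sX'b, sX'b',
      sYa, sYa', sYb, sYb', sY'a, sY'a', sY'b, sY'b',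
      h5, eh5, h6, eh6, h9, eh9, h10, eh10, rY'X, erY'X, rY'X', erY'X',
      ra'b, era'b, ra'b', era'b', h7, h7e, h8, h8e, h11', h11e,
      h1, h2, h3, h4, c1, c2, c3, c4,
      mul_assoc, smul_mul_assoc, mul_smul_comm, smul_smul, smul_add, smul_sub,
      mul_add, add_mul, mul_sub, sub_mul, mul_one, one_mul, pow_two]
    match_scalars
    · push_cast
      ring
    · push_cast
      ring
  · simp only [pXa, pXa', pXb, pXb', pX'a, pX'a', pX'b, pX'b', pYa, pYa', pYb, pYb',
      pY'a, pY'a', pY'b, pY'b', sXa, sXa', sXb, sXb', sX'a, sX'a', sX'b, sX'b',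
      sYa, sYa', sYb, sYb', sY'a, sY'a', sY'b, sY'b',
      h5, eh5, h6, eh6, h9, eh9, h10, eh10, rY'X, erY'X, rY'X', erY'X',
      ra'b, era'b, ra'b', era'b', h7, h7e, h8, h8e, h11', h11e,
      h1, h2, h3, h4, c1, c2, c3, c4,
      mul_assoc, smul_mul_assoc, mul_smul_comm, smul_smul, smul_add, smul_sub,
      mul_add, add_mul, mul_sub, sub_mul, mul_one, one_mul, pow_two]
    match_scalars
    · push_cast
      ring
    · push_cast
      ring
  · trans ((((q : ℂ) - (q : ℂ)⁻¹)⁻¹ * ((q : ℂ) - (q : ℂ)⁻¹)⁻¹) •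
        ((((((q : ℂ) ^ 2)⁻¹ : ℂ) - 1) • (a' * Y)) + ((((q : ℂ) ^ 2 - 1) : ℂ) • (a * Y'))))
    · simp only [pXa, pXa', pXb, pXb', pX'a, pX'a', pX'b, pX'b', pYa, pYa', pYb, pYb',
      pY'a, pY'a', pY'b, pY'b', sXa, sXa', sXb, sXb', sX'a, sX'a', sX'b, sX'b',
      sYa, sYa', sYb, sYb', sY'a, sY'a', sY'b, sY'b',
      h5, eh5, h6, eh6, h9, eh9, h10, eh10, rY'X, erY'X, rY'X', erY'X',
      ra'b, era'b, ra'b', era'b', h7, h7e, h8, h8e, h11', h11e,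
      h1, h2, h3, h4, c1, c2, c3, c4,
      mul_assoc, smul_mul_assoc, mul_smul_comm, smul_smul, smul_add, smul_sub,
      mul_add, add_mul, mul_sub, sub_mul, mul_one, one_mul, pow_two]
      match_scalars
      · push_cast
        linear_combination (((q ^ ((1 : ℝ) / 2) : ℝ) : ℂ) * ((q ^ ((1 : ℝ) / 2) : ℝ) : ℂ)⁻¹ * ((q : ℂ) - (q : ℂ)⁻¹)⁻¹ ^ 2) * hQQ
      · push_cast
        linear_combination (((q : ℂ) - (q : ℂ)⁻¹)⁻¹ ^ 2 * (((q : ℂ) * (q : ℂ))⁻¹ - 1)) * hAA - (((q : ℂ) - (q : ℂ)⁻¹)⁻¹ ^ 2 * ((q ^ ((1 : ℝ) / 2) : ℝ) : ℂ) * ((q ^ ((1 : ℝ) / 2) : ℝ) : ℂ)⁻¹) * hQQ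
      · push_cast
        linear_combination (((q ^ ((1 : ℝ) / 2) : ℝ) : ℂ) * ((q ^ ((1 : ℝ) / 2) : ℝ) : ℂ)⁻¹ * ((q : ℂ) - (q : ℂ)⁻¹)⁻¹ ^ 2 * (c : ℂ) * (1 - ((q : ℂ) * (q : ℂ))⁻¹)) * hqq - (((q ^ ((1 : ℝ) / 2) : ℝ) : ℂ) * ((q ^ ((1 : ℝ) / 2) : ℝ) : ℂ)⁻¹ * ((q : ℂ) - (q : ℂ)⁻¹)⁻¹ ^ 2 * (c : ℂ)) * hQQ
      · push_cast
        ring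
      · push_cast
        ring
      · push_cast
        linear_combination -(((q ^ ((1 : ℝ) / 2) : ℝ) : ℂ) * ((q ^ ((1 : ℝ) / 2) : ℝ) : ℂ)⁻¹ * ((q : ℂ) - (q : ℂ)⁻¹)⁻¹ ^ 2 * (q : ℂ) * (q : ℂ)⁻¹) * hQQ
      · push_cast
        linear_combination (((q : ℂ) - (q : ℂ)⁻¹)⁻¹ ^ 2 * ((q ^ ((1 : ℝ) / 2) : ℝ) : ℂ) * ((q ^ ((1 : ℝ) / 2) : ℝ) : ℂ)⁻¹ * ((q : ℂ) ^ 4 * ((q : ℂ) * (q : ℂ))⁻¹ - 1)) * hqq + (((q : ℂ) - (q : ℂ)⁻¹)⁻¹ ^ 2 * ((q : ℂ) ^ 2 - 1)) * hAA + (((q : ℂ) - (q : ℂ)⁻¹)⁻¹ ^ 2 * ((q ^ ((1 : ℝ) / 2) : ℝ) : ℂ) * ((q ^ ((1 : ℝ) / 2) : ℝ) : ℂ)⁻¹ * (q : ℂ) ^ 2) * hQQ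
    · simp only [pY'a, smul_sub, smul_add, smul_smul]
      match_scalars
      · push_cast
        linear_combination (((q : ℂ) - (q : ℂ)⁻¹)⁻¹ ^ 2) * hqq -
          (((q : ℂ) - (q : ℂ)⁻¹)⁻¹ * (q : ℂ)⁻¹) * hWW
      · push_cast
        linear_combination (((q : ℂ) - (q : ℂ)⁻¹)⁻¹ ^ 2) * hqq +
          (((q : ℂ) - (q : ℂ)⁻¹)⁻¹ * (q : ℂ)) * hWW
end

section
/- Let q and c be real numbers with 0 < q < 1 and c ≥ 0, and set λ := q − q^{−1}. Let R be a unital associative ℂ-algebra containing elements a, a′, b, b′, X, X′, K, K′ such that: aa′ = a′a = 1; KK′ = K′K = 1; each of X and X′ commutes with each of a, a′, b, b′; Ka = aK; bK = qKb; Kb′ = qb′K; XK = qKX; KX′ = qX′K; ab = q^{−2} ba; ab′ = q² b′a; b′b = a − a² + c; bb′ = q²a − q⁴a² + c; and X′X − q²XX′ = (1 − q²)(q² K′⁴ a² + c). Define F := q^{−3/2} λ^{−1} (X − qb) K a′ and E := q^{−3/2} λ^{−1} a′ K (X′ − q b′). Then KE = qEK, FK = qKF, and EF − FE = λ^{−1}(K²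 − K′²). -/
/-!
Write `E = s • (a' * K * Q)` and `F = s • (P * K * a')` with `P = X - q • b`, `Q = X' - q • b'`.
Both `P` and `Q` `q`-commute with `K`, and `K` commutes with `a'`; this gives the first two
relations. For the third, moving the `K`'s to the right turns `[a'KQ, PKa']` into
`(a'QPa' - q² Pa'²Q) K²`. Moving the `a'`'s to the left only rescales the `b`-parts of `P` and `Q`,
and with these scalings the mixed terms `X'b` and `b'X` cancel, leaving
`a'² (X'X - q² XX' + q² b'b - bb') K²`. The relations collapse the bracket to
`(1 - q²) q² (K'⁴ - 1) a²`, so the commutator is `(1 - q²) q² (K'² - K²)`, and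
`s² (1 - q²) q² = -λ⁻¹`.
-/

def QCommute {𝕜 A : Type*} [Mul A] [SMul 𝕜 A] (t : 𝕜) (x y : A) : Prop :=
  x * y = t • (y * x)

section Semiring

variable {𝕜 A : Type*} [CommSemiring 𝕜] [Semiring A] [Algebra 𝕜 A] {s t : 𝕜} {x y z : A}

theorem Commute.qCommute (h : Commute x y) : QCommute (1 : 𝕜) x y := by
  rw [QCommute, one_smul]
  exact h

namespace QCommute

theorem mul_right (hy : QCommute s x y) (hz : QCommute t x z) : QCommute (s * t) x (y * z) := by
  unfold QCommute at *
  rw [← mul_assoc, hy, smul_mul_assoc, mul_assoc, hz, mul_smul_comm, smul_smul, mul_assoc]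

theorem mul_left (hx : QCommute s x z) (hy : QCommute t y z) : QCommute (s * t) (x * y) z := by
  unfold QCommute at *
  rw [mul_assoc, hy, mul_smul_comm, ← mul_assoc, hx, smul_mul_assoc, smul_smul, mul_comm t,
    mul_assoc]

theorem smul_left (h : QCommute t x y) (s : 𝕜) : QCommute t (s • x) y := by
  unfold QCommute at *
  rw [smul_mul_assoc, h, mul_smul_comm, smul_comm]

theorem smul_right (h : QCommute t x y) (s : 𝕜) : QCommute t x (s • y) := by
  unfold QCommute at *
  rw [mul_smul_comm, h, smul_mul_assoc, smul_comm]

theorem units_inv_swap {u : Aˣ} (h : QCommute t (u : A) y) : QCommute t y ↑u⁻¹ := by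
  unfold QCommute at *
  calc y * ↑u⁻¹ = ↑u⁻¹ * (↑u * y) * ↑u⁻¹ := by rw [← mul_assoc, Units.inv_mul, one_mul]
    _ = t • (↑u⁻¹ * y) := by
      rw [h, mul_smul_comm, smul_mul_assoc, mul_assoc, mul_assoc, Units.mul_inv, mul_one]

end QCommute

end Semiring

section Ring

variable {𝕜 A : Type*} [CommRing 𝕜] [Ring A] [Algebra 𝕜 A] {t : 𝕜} {x y z : A}

theorem QCommute.sub_left (hx : QCommute t x z) (hy : QCommute t y z) :
    QCommute t (x - y) z := by
  unfold QCommute at *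
  rw [sub_mul, hx, hy, mul_sub, smul_sub]

theorem QCommute.sub_right (hy : QCommute t x y) (hz : QCommute t x z) :
    QCommute t x (y - z) := by
  unfold QCommute at *
  rw [mul_sub, hy, hz, sub_mul, smul_sub]

theorem sub_smul_mul_eq_mul_sub_smul {r : 𝕜} {u : A} (hx : Commute x u) (hy : QCommute r y u)
    (s : 𝕜) : (x - s • y) * u = u * (x - (s * r) • y) := by
  rw [sub_mul, smul_mul_assoc, hx.eq, hy, smul_smul, mul_sub, mul_smul_comm]

theorem sq_mul_mul_sq_eq_of_presentation {c : 𝕜} {a a' b b' x x' k k' : A} (ha : a' * a = 1)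
    (hk : k' * k = 1) (hk'a : Commute k' a) (hb'b : b' * b = a - a ^ 2 + c • (1 : A))
    (hbb' : b * b' = t ^ 2 • a - t ^ 4 • a ^ 2 + c • (1 : A))
    (hx'x : x' * x - t ^ 2 • (x * x') = (1 - t ^ 2) • (t ^ 2 • (k' ^ 4 * a ^ 2) + c • (1 : A))) :
    a' ^ 2 * (x' * x - t ^ 2 • (x * x') + t ^ 2 • (b' * b) - b * b') * k ^ 2 =
      ((1 - t ^ 2) * t ^ 2) • (k' ^ 2 - k ^ 2) := by
  have hbracket : x' * x - t ^ 2 • (x * x') + t ^ 2 • (b' * b) - b * b' =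
      ((1 - t ^ 2) * t ^ 2) • ((k' ^ 4 - 1) * a ^ 2) := by
    rw [hx'x, hb'b, hbb', sub_one_mul]
    module
  have hconj : a' ^ 2 * ((k' ^ 4 - 1) * a ^ 2) = k' ^ 4 - 1 := by
    rw [(((hk'a.pow_left 4).sub_left (Commute.one_left a)).pow_right 2).eq, ← mul_assoc,
      pow_mul_pow_eq_one 2 ha, one_mul]
  rw [hbracket, mul_smul_comm, hconj, smul_mul_assoc, sub_one_mul,
    show k' ^ 4 = k' ^ 2 * k' ^ 2 by rw [← pow_add], mul_assoc, pow_mul_pow_eq_one 2 hk, mul_one]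

end Ring

section Field

variable {𝕜 A : Type*} [Field 𝕜] [Ring A] [Algebra 𝕜 A] {t : 𝕜} {x y : A}

theorem QCommute.symm (ht : t ≠ 0) (h : QCommute t x y) : QCommute t⁻¹ y x := by
  unfold QCommute at *
  rw [h, inv_smul_smul₀ ht]

theorem commutator_mul_mul_eq_of_qCommute {k u y' : A} (ht : t ≠ 0) (hku : Commute k u)
    (hky' : QCommute t k y') (hyk : QCommute t y k) :
    u * k * y' * (y * k * u) - y * k * u * (u * k * y') =
      (u * y' * y * u - t ^ 2 • (y * u ^ 2 * y')) * k ^ 2 := by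
  have hky : QCommute t⁻¹ k y := hyk.symm ht
  have hk2y' : QCommute (t ^ 2) (k ^ 2) y' := by
    simpa only [sq] using hky'.mul_left hky'
  unfold QCommute at hk2y'
  have hkyk : k * y' * (y * k) = y' * y * k ^ 2 := by
    rw [hky', smul_mul_assoc, mul_assoc, ← mul_assoc k, hky, smul_mul_assoc, mul_smul_comm,
      smul_smul, mul_inv_cancel₀ ht, one_smul, sq]
    simp only [mul_assoc]
  have hykuk : y * k * u * (u * k * y') = y * u ^ 2 * (k ^ 2 * y') := by
    simp only [sq, mul_assoc, hku.left_comm]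
  rw [hykuk, show u * k * y' * (y * k * u) = u * (k * y' * (y * k)) * u by simp only [mul_assoc],
    hkyk]
  simp only [mul_assoc, (hku.pow_left 2).eq, hk2y', mul_smul_comm, sub_mul, smul_mul_assoc]

theorem mul_sub_smul_mul_sub_smul_mul_eq_of_qCommute {u x x' y y' : A} (ht : t ≠ 0)
    (hxu : Commute x u) (hx'u : Commute x' u) (hyu : QCommute (t ^ 2)⁻¹ y u)
    (hy'u : QCommute (t ^ 2) y' u) (hx'y : Commute x' y) (hxy' : Commute x y') :
    u * (x' - t • y') * (x - t • y) * u - t ^ 2 • ((x - t • y) * u ^ 2 * (x' - t • y')) =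
      u ^ 2 * (x' * x - t ^ 2 • (x * x') + t ^ 2 • (y' * y) - y * y') := by
  have hQu := sub_smul_mul_eq_mul_sub_smul hx'u hy'u t
  have hPu := sub_smul_mul_eq_mul_sub_smul hxu hyu t
  have hPuu := sub_smul_mul_eq_mul_sub_smul hxu hyu (t * (t ^ 2)⁻¹)
  have hQP : u * (x' - t • y') * (x - t • y) * u
      = u ^ 2 * ((x' - (t * t ^ 2) • y') * (x - (t * (t ^ 2)⁻¹) • y)) := by
    rw [mul_assoc (u * _), hPu, ← mul_assoc, mul_assoc u, hQu, pow_two u]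
    simp only [mul_assoc]
  have hPQ : (x - t • y) * u ^ 2 * (x' - t • y')
      = u ^ 2 * ((x - (t * (t ^ 2)⁻¹ * (t ^ 2)⁻¹) • y) * (x' - t • y')) := by
    rw [pow_two u, ← mul_assoc _ u, hPu, mul_assoc u, hPuu]
    simp only [mul_assoc]
  rw [hQP, hPQ, ← mul_smul_comm, ← mul_sub]
  congr 1
  simp only [mul_sub, sub_mul, smul_mul_assoc, mul_smul_comm, smul_sub, hx'y.eq, hxy'.eq]
  match_scalars <;> field_simp <;> ring

end Field

theorem rpow_neg_three_halves_mul_inv_sub_inv_sq_mul {q : ℝ} (hq : 0 < q) :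
    (q ^ (-(3 : ℝ) / 2) * (q - q⁻¹)⁻¹) ^ 2 * ((1 - q ^ 2) * q ^ 2) = -(q - q⁻¹)⁻¹ := by
  have hrpow : (q ^ (-(3 : ℝ) / 2)) ^ 2 * q ^ 3 = 1 := by
    rw [← Real.rpow_natCast, ← Real.rpow_mul hq.le, ← Real.rpow_natCast, ← Real.rpow_add hq]
    norm_num
  have hlam : (1 - q ^ 2) * q ^ 2 = -(q - q⁻¹) * q ^ 3 := by
    field_simp
    ring
  -- `λ⁻¹ * λ⁻¹ * λ = λ⁻¹` holds also at the junk value `λ = 0`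
  calc (q ^ (-(3 : ℝ) / 2) * (q - q⁻¹)⁻¹) ^ 2 * ((1 - q ^ 2) * q ^ 2)
      = -((q ^ (-(3 : ℝ) / 2)) ^ 2 * q ^ 3) * ((q - q⁻¹)⁻¹ * (q - q⁻¹)⁻¹ * (q - q⁻¹)⁻¹⁻¹) := by
        rw [hlam, inv_inv]
        ring
    _ = -(q - q⁻¹)⁻¹ := by rw [hrpow, mul_self_mul_inv, neg_one_mul]

theorem decoupled_presentation_uq_relations_general
    (q c : ℝ) (hq0 : 0 < q)
    {R : Type*} [Ring R] [Algebra ℂ R]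
    (a a' b b' X X' K K' : R)
    (h1 : a * a' = 1) (h2 : a' * a = 1)
    (h3 : K * K' = 1) (h4 : K' * K = 1)
    (hcomm : ∀ u ∈ ({X, X'} : Set R), ∀ w ∈ ({a, a', b, b'} : Set R), u * w = w * u)
    (h5 : K * a = a * K)
    (h6 : b * K = (q : ℂ) • (K * b))
    (h7 : K * b' = (q : ℂ) • (b' * K))
    (h8 : X * K = (q : ℂ) • (K * X))
    (h9 : K * X' = (q : ℂ) • (X' * K))
    (h10 : a * b = (((q : ℂ) ^ 2)⁻¹) • (b * a))
    (h11 : a * b' = ((q : ℂ) ^ 2) • (b' * a))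
    (h12 : b' * b = a - a ^ 2 + (c : ℂ) • (1 : R))
    (h13 : b * b' = ((q : ℂ) ^ 2) • a - ((q : ℂ) ^ 4) • a ^ 2 + (c : ℂ) • (1 : R))
    (h14 : X' * X - ((q : ℂ) ^ 2) • (X * X')
      = ((1 - q ^ 2 : ℝ) : ℂ) • (((q : ℂ) ^ 2) • (K' ^ 4 * a ^ 2) + (c : ℂ) • (1 : R)))
    (E F : R)
    (hF : F = ((q ^ (-(3 : ℝ) / 2) * (q - q⁻¹)⁻¹ : ℝ) : ℂ) • ((X - (q : ℂ) • b) * K * a'))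
    (hE : E = ((q ^ (-(3 : ℝ) / 2) * (q - q⁻¹)⁻¹ : ℝ) : ℂ) • (a' * K * (X' - (q : ℂ) • b'))) :
    K * E = (q : ℂ) • (E * K) ∧
    F * K = (q : ℂ) • (K * F) ∧
    E * F - F * E = (((q - q⁻¹)⁻¹ : ℝ) : ℂ) • (K ^ 2 - K' ^ 2) := by
  set s : ℂ := ((q ^ (-(3 : ℝ) / 2) * (q - q⁻¹)⁻¹ : ℝ) : ℂ) with hs
  set P := X - (q : ℂ) • b
  set Q := X' - (q : ℂ) • b'
  have hq : (q : ℂ) ≠ 0 := by exact_mod_cast hq0.ne'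
  have hXa' : Commute X a' := hcomm X (by simp) a' (by simp)
  have hXb' : Commute X b' := hcomm X (by simp) b' (by simp)
  have hX'a' : Commute X' a' := hcomm X' (by simp) a' (by simp)
  have hX'b : Commute X' b := hcomm X' (by simp) b (by simp)
  have hKa' : Commute K a' := Commute.units_inv_right (u := ⟨a, a', h1, h2⟩) h5
  have hK'a : Commute K' a := Commute.units_inv_left (u := ⟨K, K', h3, h4⟩) h5
  have hba' : QCommute ((q : ℂ) ^ 2)⁻¹ b a' := QCommute.units_inv_swap (u := ⟨a, a', h1, h2⟩) h10
  have hb'a' : QCommute ((q : ℂ) ^ 2) b' a' := QCommute.units_inv_swap (u := ⟨a, a', h1, h2⟩) h11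
  have hPK : QCommute (q : ℂ) P K := QCommute.sub_left h8 (QCommute.smul_left h6 _)
  have hKQ : QCommute (q : ℂ) K Q := QCommute.sub_right h9 (QCommute.smul_right h7 _)
  refine ⟨?_, ?_, ?_⟩
  · have hKE := ((hKa'.qCommute.mul_right (Commute.refl K).qCommute).mul_right hKQ).smul_right s
    rw [one_mul, one_mul] at hKE
    rwa [hE]
  · have hFK := ((hPK.mul_left (Commute.refl K).qCommute).mul_left hKa'.symm.qCommute).smul_left s
    rw [mul_one, mul_one] at hFK
    rwa [hF]
  · push_cast at h14
    have hscalar : s * s * ((1 - (q : ℂ) ^ 2) * (q : ℂ) ^ 2) = -(((q - q⁻¹)⁻¹ : ℝ) : ℂ) := by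
      rw [hs, ← sq]
      exact_mod_cast rpow_neg_three_halves_mul_inv_sub_inv_sq_mul hq0
    calc E * F - F * E
        = (s * s) • (a' * K * Q * (P * K * a') - P * K * a' * (a' * K * Q)) := by
          rw [hE, hF, smul_mul_smul_comm, smul_mul_smul_comm, smul_sub]
      _ = (s * s) • ((a' * Q * P * a' - (q : ℂ) ^ 2 • (P * a' ^ 2 * Q)) * K ^ 2) := by
          rw [commutator_mul_mul_eq_of_qCommute hq hKa' hKQ hPK]
      _ = (s * s) • (a' ^ 2 * (X' * X - (q : ℂ) ^ 2 • (X * X') + (q : ℂ) ^ 2 • (b' * b) - b * b')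
            * K ^ 2) := by
          rw [mul_sub_smul_mul_sub_smul_mul_eq_of_qCommute hq hXa' hX'a' hba' hb'a' hX'b hXb']
      _ = (((q - q⁻¹)⁻¹ : ℝ) : ℂ) • (K ^ 2 - K' ^ 2) := by
          rw [sq_mul_mul_sq_eq_of_presentation h2 h4 hK'a h12 h13 h14, smul_smul, hscalar,
            neg_smul, ← smul_neg, neg_sub]

/-- Alternative presentation of `Ô(S²_{qc}) ⋊ U_q(su₂)`: given the two sets of generators
`a, a′, b, b′` and `X, X′, K, K′` with the listed relations, the elements
`F = q^{−3/2} λ⁻¹ (X − q b) K a′` and `E = q^{−3/2} λ⁻¹ a′ K (X′ − q b′)` (where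
`λ = q − q⁻¹`) satisfy `K E = q E K`, `F K = q K F` and
`E F − F E = λ⁻¹ (K² − K′²)`. -/
theorem decoupled_presentation_uq_relations
    (q c : ℝ) (hq0 : 0 < q) (hq1 : q < 1) (hc : 0 ≤ c)
    {R : Type*} [Ring R] [Algebra ℂ R]
    (a a' b b' X X' K K' : R)
    (h1 : a * a' = 1) (h2 : a' * a = 1)
    (h3 : K * K' = 1) (h4 : K' * K = 1)
    (hcomm : ∀ u ∈ ({X, X'} : Set R), ∀ w ∈ ({a, a', b, b'} : Set R), u * w = w * u)
    (h5 : K * a = a * K)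
    (h6 : b * K = (q : ℂ) • (K * b))
    (h7 : K * b' = (q : ℂ) • (b' * K))
    (h8 : X * K = (q : ℂ) • (K * X))
    (h9 : K * X' = (q : ℂ) • (X' * K))
    (h10 : a * b = (((q : ℂ) ^ 2)⁻¹) • (b * a))
    (h11 : a * b' = ((q : ℂ) ^ 2) • (b' * a))
    (h12 : b' * b = a - a ^ 2 + (c : ℂ) • (1 : R))
    (h13 : b * b' = ((q : ℂ) ^ 2) • a - ((q : ℂ) ^ 4) • a ^ 2 + (c : ℂ) • (1 : R))
    (h14 : X' * X - ((q : ℂ) ^ 2) • (X * X')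
      = ((1 - q ^ 2 : ℝ) : ℂ) • (((q : ℂ) ^ 2) • (K' ^ 4 * a ^ 2) + (c : ℂ) • (1 : R)))
    (E F : R)
    (hF : F = ((q ^ (-(3 : ℝ) / 2) * (q - q⁻¹)⁻¹ : ℝ) : ℂ) • ((X - (q : ℂ) • b) * K * a'))
    (hE : E = ((q ^ (-(3 : ℝ) / 2) * (q - q⁻¹)⁻¹ : ℝ) : ℂ) • (a' * K * (X' - (q : ℂ) • b'))) :
    K * E = (q : ℂ) • (E * K) ∧
    F * K = (q : ℂ) • (K * F) ∧
    E * F - F * E = (((q - q⁻¹)⁻¹ : ℝ) : ℂ) • (K ^ 2 - K' ^ 2) :=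
  decoupled_presentation_uq_relations_general q c hq0 a a' b b' X X' K K' h1 h2 h3 h4 hcomm h5 h6 h7
    h8 h9 h10 h11 h12 h13 h14 E F hF hE
end

section
/- Let q be a real number with 0 < q < 1, let N be a positive integer, and set [x] := (q^x − q^{−x})/(q − q^{−1}) for real x. Let α⁰ : {0, 1, …, N} → ℂ be given by α⁰(m) = q^{1−m} ([m][N−m+1])^{1/2} [N]^{−1/2} α⁰(1) for 1 ≤ m ≤ N, and suppose β : {0, 1, …, N} → ℂ satisfies the boundary condition α⁰(1) = −[2]^{1/2} [N]^{−1/2} q^{N/2+1} β(0) and the recurrence ([m][N−m+1])^{1/2} β(m) = ([m][N−m+1])^{1/2} β(m−1) + [2]^{1/2} q^{N/2−m} α⁰(m) for 1 ≤ m ≤ N. Then β(m) = (1 − q^{N−m+1}[m][2][N]^{−1}) β(0) for all 0 ≤ m ≤ N. -/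
/-- Solution of the recurrence for the coefficients `β(m) = β⁰(l, l−m)` (with `N = 2l`):
if `α⁰(m) = q^{1−m} ([m][N−m+1])^{1/2} [N]^{−1/2} α⁰(1)`,
`α⁰(1) = −[2]^{1/2} [N]^{−1/2} q^{N/2+1} β(0)` and
`([m][N−m+1])^{1/2} β(m) = ([m][N−m+1])^{1/2} β(m−1) + [2]^{1/2} q^{N/2−m} α⁰(m)`
for `1 ≤ m ≤ N`, then `β(m) = (1 − q^{N−m+1} [m][2][N]⁻¹) β(0)` for `0 ≤ m ≤ N`.
Here `[x] = (qˣ − q⁻ˣ)/(q − q⁻¹)`. -/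
theorem beta_nought_recurrence_solution
    (q : ℝ) (hq0 : 0 < q) (hq1 : q < 1) (N : ℕ) (hN : 1 ≤ N)
    (qn : ℝ → ℝ) (hqn : ∀ x : ℝ, qn x = (q ^ x - q ^ (-x)) / (q - q⁻¹))
    (α β : ℕ → ℂ)
    (hα : ∀ m : ℕ, 1 ≤ m → m ≤ N →
      α m = ((q ^ ((1 : ℝ) - m) * Real.sqrt (qn m * qn ((N : ℝ) - m + 1))
        * (Real.sqrt (qn N))⁻¹ : ℝ) : ℂ) * α 1)
    (hbd : α 1 = -(((Real.sqrt (qn 2) * (Real.sqrt (qn N))⁻¹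
      * q ^ ((N : ℝ) / 2 + 1) : ℝ) : ℂ)) * β 0)
    (hrec : ∀ m : ℕ, 1 ≤ m → m ≤ N →
      ((Real.sqrt (qn m * qn ((N : ℝ) - m + 1)) : ℝ) : ℂ) * β m
        = ((Real.sqrt (qn m * qn ((N : ℝ) - m + 1)) : ℝ) : ℂ) * β (m - 1)
          + ((Real.sqrt (qn 2) * q ^ ((N : ℝ) / 2 - m) : ℝ) : ℂ) * α m) :
    ∀ m : ℕ, m ≤ N →
      β m = ((1 - q ^ ((N : ℝ) - m + 1) * qn m * qn 2 * (qn N)⁻¹ : ℝ) : ℂ) * β 0 := by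
  have hd : q - q⁻¹ < 0 := by
    have : 1 < q⁻¹ := one_lt_inv_iff₀.mpr ⟨hq0, hq1⟩
    linarith
  have hdne : q - q⁻¹ ≠ 0 := ne_of_lt hd
  have p : ∀ a b : ℝ, q ^ a * q ^ b = q ^ (a + b) := fun a b => (Real.rpow_add hq0 a b).symm
  have hqnpos : ∀ x : ℝ, 0 < x → 0 < qn x := by
    intro x hx
    rw [hqn]
    apply div_pos_of_neg_of_neg _ hd
    have : q ^ x < q ^ (-x) := Real.rpow_lt_rpow_of_exponent_gt hq0 hq1 (by linarith)
    linarith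
  have h2pos : 0 < qn 2 := hqnpos 2 two_pos
  have hNpos : 0 < qn N := hqnpos N (by exact_mod_cast Nat.lt_of_lt_of_le Nat.zero_lt_one hN)
  -- key exponent identity
  have hkey : ∀ m : ℕ, q ^ ((N:ℝ) - m) * qn ((m:ℝ)+1)
      = q ^ ((N:ℝ) - m + 1) * qn m + q ^ ((N:ℝ) - 2*m) := by
    intro m
    have hnum : q ^ ((N:ℝ) - m) * (q ^ ((m:ℝ)+1) - q ^ (-((m:ℝ)+1)))
        = q ^ ((N:ℝ) - m + 1) * (q ^ (m:ℝ) - q ^ (-(m:ℝ))) + q ^ ((N:ℝ) - 2*m) * (q - q⁻¹) := by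
      rw [show q - q⁻¹ = q ^ (1:ℝ) - q ^ (-1:ℝ) by rw [Real.rpow_one, Real.rpow_neg_one]]
      simp only [mul_sub, p]
      norm_num
      ring_nf
    rw [hqn, hqn, ← mul_div_assoc, ← mul_div_assoc, div_add' _ _ _ hdne,
      div_eq_div_iff hdne hdne]
    linear_combination (q - q⁻¹) * hnum
  -- one step of the recurrence
  have hstep : ∀ m : ℕ, 1 ≤ m → m ≤ N →
      β m = β (m - 1) + ((-(qn 2) * q ^ ((N:ℝ) - 2*m + 2) * (qn N)⁻¹ : ℝ) : ℂ) * β 0 := by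
    intro m h1 h2
    have hmN : (m:ℝ) ≤ N := by exact_mod_cast h2
    have hSpos : 0 < qn m * qn ((N:ℝ) - m + 1) :=
      mul_pos (hqnpos _ (by exact_mod_cast h1)) (hqnpos _ (by linarith))
    set S := Real.sqrt (qn m * qn ((N:ℝ) - m + 1)) with hSdef
    have hS0 : (S:ℂ) ≠ 0 := Complex.ofReal_ne_zero.mpr (Real.sqrt_pos.mpr hSpos).ne'
    have hcoef : Real.sqrt (qn 2) * q ^ ((N:ℝ)/2 - m)
        * (q ^ ((1:ℝ) - m) * S * (Real.sqrt (qn N))⁻¹)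
        * (Real.sqrt (qn 2) * (Real.sqrt (qn N))⁻¹ * q ^ ((N:ℝ)/2 + 1))
        = qn 2 * q ^ ((N:ℝ) - 2*m + 2) * (qn N)⁻¹ * S := by
      have h2' : Real.sqrt (qn 2) * Real.sqrt (qn 2) = qn 2 := Real.mul_self_sqrt h2pos.le
      have hN' : (Real.sqrt (qn N))⁻¹ * (Real.sqrt (qn N))⁻¹ = (qn N)⁻¹ := by
        rw [← mul_inv, Real.mul_self_sqrt hNpos.le]
      have hqq : q ^ ((N:ℝ)/2 - m) * q ^ ((1:ℝ) - m) * q ^ ((N:ℝ)/2 + 1)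
          = q ^ ((N:ℝ) - 2*m + 2) := by
        rw [p, p]; congr 1; ring
      conv_rhs => rw [← hqq, ← h2', ← hN']
      ring
    have h := hrec m h1 h2
    rw [hα m h1 h2, hbd] at h
    apply mul_left_cancel₀ hS0
    rw [mul_add, h]
    have hcoefC := congrArg (fun x : ℝ => (x : ℂ)) hcoef
    push_cast at hcoefC ⊢
    linear_combination (-hcoefC) * β 0
  -- induction
  intro m
  induction m with
  | zero =>
    intro _
    have h0 : qn 0 = 0 := by rw [hqn]; simp
    push_cast
    rw [h0]
    push_cast
    ring
  | succ m ih =>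
    intro hm
    have ihm := ih (Nat.le_of_succ_le hm)
    have hs := hstep (m+1) (Nat.le_add_left 1 m) hm
    rw [Nat.add_sub_cancel] at hs
    rw [hs, ihm]
    have hr : (1 - q ^ ((N:ℝ) - ((m+1:ℕ):ℝ) + 1) * qn ((m+1:ℕ):ℝ) * qn 2 * (qn N)⁻¹ : ℝ)
        = (1 - q ^ ((N:ℝ) - m + 1) * qn m * qn 2 * (qn N)⁻¹)
          + (-(qn 2) * q ^ ((N:ℝ) - 2*((m+1:ℕ):ℝ) + 2) * (qn N)⁻¹) := by
      have hk := hkey m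
      push_cast
      rw [show (N:ℝ) - ((m:ℝ)+1) + 1 = (N:ℝ) - m by ring,
        show (N:ℝ) - 2*((m:ℝ)+1) + 2 = (N:ℝ) - 2*m by ring]
      linear_combination -(qn 2) * (qn N)⁻¹ * hk
    have hrC : ((1 - q ^ ((N:ℝ) - ((m+1:ℕ):ℝ) + 1) * qn ((m+1:ℕ):ℝ) * qn 2 * (qn N)⁻¹ : ℝ) : ℂ)
        = ((1 - q ^ ((N:ℝ) - m + 1) * qn m * qn 2 * (qn N)⁻¹ : ℝ) : ℂ)
          + ((-(qn 2) * q ^ ((N:ℝ) - 2*((m+1:ℕ):ℝ) + 2) * (qn N)⁻¹ : ℝ) : ℂ) := by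
      rw [← Complex.ofReal_add]; exact congrArg _ hr
    rw [hrC, add_mul]
end

section
/- Let q, c, l₀ be real numbers with 0 < q < 1, c ≥ 0, l₀ ≥ 0, let l = l₀ + n for some n ∈ ℕ, and let ε ∈ {+1, −1}. Set λ := q − q^{−1}, [x] := (q^x − q^{−x})/(q − q^{−1}) for real x, λ_ε := 1/2 + ε(c + 1/4)^{1/2}, λ_{−ε} := 1/2 − ε(c + 1/4)^{1/2}, and β := [2l+2]^{−1}([2l₀](q^{−2} λ_ε − λ_{−ε}) − (1 − q^{−2})[l−l₀][l+l₀+1]). Then [2][2l+2][2l+3]^{−1} (c + 1/4 − ((1 + q^{−2})^{−1}(1 − β) − 1/2)²) = [2]^{1}[2l+3]^{−1}[2l+2]^{−1} ([2l+2]²(c + 1/4) − (−(λ/2)[l−l₀+1][l+l₀+1] + ε[2l₀](c + 1/4)^{1/2})²). -/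
/-!
With `X = (1 + q⁻²)⁻¹ (1 − β) − 1/2` the identity says `[2l+2] X = −Y`, where `Y` is the term squared
on the right. After substituting `β` this is linear in `ε √(c + 1/4)`, and what remains is the
q-number identity `[2][l−l₀+1][l+l₀+1] = [2l+2] + [2l₀] + 2[l−l₀][l+l₀+1]`, a consequence of the
product formula `(qˣ + q⁻ˣ)[y] = [x+y] + [y−x]`. When `[2l+2] = 0` both sides vanish.
-/

noncomputable def qNum (q x : ℝ) : ℝ := (q ^ x - q ^ (-x)) / (q - q⁻¹)

section
variable {q : ℝ}

theorem qNum_neg (x : ℝ) : qNum q (-x) = -qNum q x := by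
  rw [qNum, qNum, neg_neg, ← neg_div, neg_sub]

theorem qNum_one (hq : q - q⁻¹ ≠ 0) : qNum q 1 = 1 := by
  rw [qNum, Real.rpow_one, Real.rpow_neg_one, div_self hq]

theorem rpow_add_rpow_neg_mul_qNum (hq : 0 < q) (x y : ℝ) :
    (q ^ x + q ^ (-x)) * qNum q y = qNum q (x + y) + qNum q (y - x) := by
  simp only [qNum, ← add_div, mul_div_assoc']
  congr 1
  simp only [mul_sub, add_mul, ← Real.rpow_add hq]
  ring_nf

theorem add_inv_mul_qNum_add_one_mul_qNum (hq : 0 < q) (hq₁ : q - q⁻¹ ≠ 0) (u v : ℝ) :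
    (q + q⁻¹) * qNum q (u + 1) * qNum q v
      = qNum q (u + v + 1) + qNum q (v - u - 1) + 2 * qNum q u * qNum q v := by
  have h₁ : (q + q⁻¹) * qNum q (u + 1) = qNum q (u + 2) + qNum q u := by
    have := rpow_add_rpow_neg_mul_qNum hq 1 (u + 1)
    rwa [Real.rpow_one, Real.rpow_neg_one, add_sub_cancel_right, add_comm 1, add_assoc,
      one_add_one_eq_two] at this
  have h₂ : q ^ (u + 1) + q ^ (-(u + 1)) = qNum q (u + 2) - qNum q u := by
    have := rpow_add_rpow_neg_mul_qNum hq (u + 1) 1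
    rwa [qNum_one hq₁, mul_one, show u + 1 + 1 = u + 2 by ring, show 1 - (u + 1) = -u by ring,
      qNum_neg, ← sub_eq_add_neg] at this
  have h₃ := rpow_add_rpow_neg_mul_qNum hq (u + 1) v
  rw [h₂, show u + 1 + v = u + v + 1 by ring, show v - (u + 1) = v - u - 1 by ring] at h₃
  rw [h₁, ← h₃]
  ring

end

theorem mul_one_add_inv_sq_inv_mul_one_sub_sub_half {q N A P P₁ R s β : ℝ}
    (hq : q ≠ 0) (hN : N ≠ 0)
    (hrel : (q + q⁻¹) * P₁ * R = N + A + 2 * P * R)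
    (hβ : β = N⁻¹ * (A * ((q ^ 2)⁻¹ * (1 / 2 + s) - (1 / 2 - s)) - (1 - (q ^ 2)⁻¹) * P * R)) :
    N * ((1 + (q ^ 2)⁻¹)⁻¹ * (1 - β) - 1 / 2) = -(-((q - q⁻¹) / 2) * P₁ * R + A * s) := by
  subst hβ
  field_simp at hrel ⊢
  linear_combination (1 - q ^ 2) * hrel

theorem mul_mul_inv_sub_sq_eq {a N M C X Y : ℝ} (hN : N ≠ 0) (h : N * X = -Y) :
    a * N * M⁻¹ * (C - X ^ 2) = a * M⁻¹ * N⁻¹ * (N ^ 2 * C - Y ^ 2) := by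
  rw [show Y = -(N * X) by linarith]
  field_simp

theorem alpha_plus_squared_formula_general
    (q c l₀ : ℝ) (hq0 : 0 < q)
    (l : ℝ)
    (ε : ℝ)
    (qn : ℝ → ℝ) (hqn : ∀ x : ℝ, qn x = (q ^ x - q ^ (-x)) / (q - q⁻¹))
    (le lme β : ℝ)
    (hle : le = 1 / 2 + ε * Real.sqrt (c + 1 / 4))
    (hlme : lme = 1 / 2 - ε * Real.sqrt (c + 1 / 4))
    (hβ : β = (qn (2 * l + 2))⁻¹ * (qn (2 * l₀) * ((q ^ 2)⁻¹ * le - lme)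
      - (1 - (q ^ 2)⁻¹) * qn (l - l₀) * qn (l + l₀ + 1))) :
    qn 2 * qn (2 * l + 2) * (qn (2 * l + 3))⁻¹
        * (c + 1 / 4 - ((1 + (q ^ 2)⁻¹)⁻¹ * (1 - β) - 1 / 2) ^ 2)
      = qn 2 * (qn (2 * l + 3))⁻¹ * (qn (2 * l + 2))⁻¹
        * ((qn (2 * l + 2)) ^ 2 * (c + 1 / 4)
          - (-((q - q⁻¹) / 2) * qn (l - l₀ + 1) * qn (l + l₀ + 1)
            + ε * qn (2 * l₀) * Real.sqrt (c + 1 / 4)) ^ 2) := by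
  obtain rfl : qn = qNum q := funext hqn
  subst hle hlme
  rcases eq_or_ne (qNum q (2 * l + 2)) 0 with hN | hN
  · simp [hN]
  apply mul_mul_inv_sub_sq_eq hN
  have hq₁ : q - q⁻¹ ≠ 0 := fun h => hN (by rw [qNum, h, div_zero])
  have hrel := add_inv_mul_qNum_add_one_mul_qNum hq0 hq₁ (l - l₀) (l + l₀ + 1)
  rw [show l - l₀ + (l + l₀ + 1) + 1 = 2 * l + 2 by ring,
    show l + l₀ + 1 - (l - l₀) - 1 = 2 * l₀ by ring] at hrel
  rw [mul_one_add_inv_sq_inv_mul_one_sub_sub_half hq0.ne' hN hrel hβ]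
  ring

/-- With `[x] = (qˣ − q⁻ˣ)/(q − q⁻¹)`, `λ = q − q⁻¹`, `λ_ε = 1/2 + ε (c + 1/4)^{1/2}`,
`λ_{−ε} = 1/2 − ε (c + 1/4)^{1/2}`, `l = l₀ + n` and
`β = [2l+2]⁻¹ ([2l₀](q⁻² λ_ε − λ_{−ε}) − (1 − q⁻²)[l−l₀][l+l₀+1])`, one has
`[2][2l+2][2l+3]⁻¹ (c + 1/4 − ((1 + q⁻²)⁻¹ (1 − β) − 1/2)²)
  = [2][2l+3]⁻¹[2l+2]⁻¹ ([2l+2]² (c + 1/4)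
      − (−(λ/2)[l−l₀+1][l+l₀+1] + ε [2l₀](c + 1/4)^{1/2})²)`. -/
theorem alpha_plus_squared_formula
    (q c l₀ : ℝ) (hq0 : 0 < q) (hq1 : q < 1) (hc : 0 ≤ c) (hl₀ : 0 ≤ l₀)
    (n : ℕ) (l : ℝ) (hl : l = l₀ + n)
    (ε : ℝ) (hε : ε = 1 ∨ ε = -1)
    (qn : ℝ → ℝ) (hqn : ∀ x : ℝ, qn x = (q ^ x - q ^ (-x)) / (q - q⁻¹))
    (le lme β : ℝ)
    (hle : le = 1 / 2 + ε * Real.sqrt (c + 1 / 4))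
    (hlme : lme = 1 / 2 - ε * Real.sqrt (c + 1 / 4))
    (hβ : β = (qn (2 * l + 2))⁻¹ * (qn (2 * l₀) * ((q ^ 2)⁻¹ * le - lme)
      - (1 - (q ^ 2)⁻¹) * qn (l - l₀) * qn (l + l₀ + 1))) :
    qn 2 * qn (2 * l + 2) * (qn (2 * l + 3))⁻¹
        * (c + 1 / 4 - ((1 + (q ^ 2)⁻¹)⁻¹ * (1 - β) - 1 / 2) ^ 2)
      = qn 2 * (qn (2 * l + 3))⁻¹ * (qn (2 * l + 2))⁻¹
        * ((qn (2 * l + 2)) ^ 2 * (c + 1 / 4)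
          - (-((q - q⁻¹) / 2) * qn (l - l₀ + 1) * qn (l + l₀ + 1)
            + ε * qn (2 * l₀) * Real.sqrt (c + 1 / 4)) ^ 2) :=
  alpha_plus_squared_formula_general q c l₀ hq0 l ε qn hqn le lme β hle hlme hβ
end

section
/- Let q be a real number with 0 < q < 1, let N be a positive integer, and set [x] := (q^x − q^{−x})/(q − q^{−1}) for real x. Let α : {0, 1, …, N} → ℂ be given by α(m) = q^{−m} ([N−m+1][N−m+2])^{1/2} ([N+1][N+2])^{−1/2} α(0), and suppose β : {0, 1, …, N} → ℂ satisfies the boundary condition β(0) = q^{N/2} [2]^{1/2} [N+2]^{−1/2} α(0) and the recurrence ([m+1][N−m+2])^{1/2} β(m) = ([m][N−m+1])^{1/2} β(m−1) + [2]^{1/2} q^{N/2−m} α(m) for all 1 ≤ m ≤ N. Then β(m) = q^{N/2−m} ([m+1][N−m+1])^{1/2} [2]^{1/2} ([N+1][N+2])^{−1/2} α(0) for all 0 ≤ m ≤ N. -/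
/-- Solution of the recurrence for the coefficients `β(m) = β⁺(l, l−m)` (with `N = 2l`):
if `α(m) = q^{−m} ([N−m+1][N−m+2])^{1/2} ([N+1][N+2])^{−1/2} α(0)`,
`β(0) = q^{N/2} [2]^{1/2} [N+2]^{−1/2} α(0)` and
`([m+1][N−m+2])^{1/2} β(m) = ([m][N−m+1])^{1/2} β(m−1) + [2]^{1/2} q^{N/2−m} α(m)`
for `1 ≤ m ≤ N`, then
`β(m) = q^{N/2−m} ([m+1][N−m+1])^{1/2} [2]^{1/2} ([N+1][N+2])^{−1/2} α(0)` for
`0 ≤ m ≤ N`.  Here `[x] = (qˣ − q⁻ˣ)/(q − q⁻¹)`. -/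
theorem beta_plus_recurrence_solution
    (q : ℝ) (hq0 : 0 < q) (hq1 : q < 1) (N : ℕ) (hN : 1 ≤ N)
    (qn : ℝ → ℝ) (hqn : ∀ x : ℝ, qn x = (q ^ x - q ^ (-x)) / (q - q⁻¹))
    (α β : ℕ → ℂ)
    (hα : ∀ m : ℕ, m ≤ N →
      α m = ((q ^ (-(m : ℝ)) * Real.sqrt (qn ((N : ℝ) - m + 1) * qn ((N : ℝ) - m + 2))
        * (Real.sqrt (qn ((N : ℝ) + 1) * qn ((N : ℝ) + 2)))⁻¹ : ℝ) : ℂ) * α 0)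
    (hbd : β 0 = ((q ^ ((N : ℝ) / 2) * Real.sqrt (qn 2)
      * (Real.sqrt (qn ((N : ℝ) + 2)))⁻¹ : ℝ) : ℂ) * α 0)
    (hrec : ∀ m : ℕ, 1 ≤ m → m ≤ N →
      ((Real.sqrt (qn ((m : ℝ) + 1) * qn ((N : ℝ) - m + 2)) : ℝ) : ℂ) * β m
        = ((Real.sqrt (qn m * qn ((N : ℝ) - m + 1)) : ℝ) : ℂ) * β (m - 1)
          + ((Real.sqrt (qn 2) * q ^ ((N : ℝ) / 2 - m) : ℝ) : ℂ) * α m) :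
    ∀ m : ℕ, m ≤ N →
      β m = ((q ^ ((N : ℝ) / 2 - m) * Real.sqrt (qn ((m : ℝ) + 1) * qn ((N : ℝ) - m + 1))
        * Real.sqrt (qn 2)
        * (Real.sqrt (qn ((N : ℝ) + 1) * qn ((N : ℝ) + 2)))⁻¹ : ℝ) : ℂ) * α 0 := by
  have hqne : q ≠ 0 := hq0.ne'
  have hiq : 0 < q⁻¹ := inv_pos.mpr hq0
  have hden : q - q⁻¹ < 0 := by nlinarith [mul_inv_cancel₀ hqne]
  have hq2 : (-1 + q^2) ≠ 0 := by nlinarith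
  have hpos : ∀ x : ℝ, 0 < x → 0 < qn x := by
    intro x hx
    rw [hqn]
    apply div_pos_of_neg_of_neg _ hden
    have : q ^ x < q ^ (-x) := Real.rpow_lt_rpow_of_exponent_gt hq0 hq1 (by linarith)
    linarith
  have hkey : ∀ x : ℝ, qn (x + 1) = q * qn x + q ^ (-x) := by
    intro x
    rw [hqn, hqn, show -(x+1) = -x + -1 by ring, Real.rpow_add hq0, Real.rpow_add hq0,
      Real.rpow_one, Real.rpow_neg_one]
    field_simp
    linear_combination q ^ (-x) * mul_inv_cancel₀ hq2
  have hsq : ∀ a b c : ℝ, 0 ≤ a → 0 ≤ b →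
      Real.sqrt (a * b) * Real.sqrt (a * c) = a * Real.sqrt (b * c) := by
    intro a b c ha hb
    rw [Real.sqrt_mul ha, Real.sqrt_mul ha, Real.sqrt_mul hb]
    rw [show Real.sqrt a * Real.sqrt b * (Real.sqrt a * Real.sqrt c)
        = (Real.sqrt a * Real.sqrt a) * (Real.sqrt b * Real.sqrt c) by ring,
      Real.mul_self_sqrt ha]
  have h1qn : qn 1 = 1 := by
    rw [hqn, Real.rpow_one, Real.rpow_neg_one]
    exact div_self hden.ne
  intro m
  induction m with
  | zero =>
    intro _
    rw [hbd]
    congr 1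
    have hN1 : 0 < qn ((N:ℝ)+1) := hpos _ (by positivity)
    have s1 : Real.sqrt (qn ((N:ℝ)+1)) ≠ 0 := by positivity
    have hXY : q ^ ((N:ℝ)/2) * Real.sqrt (qn 2) * (Real.sqrt (qn ((N:ℝ)+2)))⁻¹
        = q ^ ((N:ℝ)/2 - ((0:ℕ):ℝ)) * Real.sqrt (qn (((0:ℕ):ℝ)+1) * qn ((N:ℝ)-((0:ℕ):ℝ)+1))
          * Real.sqrt (qn 2) * (Real.sqrt (qn ((N:ℝ)+1) * qn ((N:ℝ)+2)))⁻¹ := by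
      rw [Nat.cast_zero, sub_zero, sub_zero, zero_add, h1qn, one_mul,
        Real.sqrt_mul hN1.le, mul_inv]
      linear_combination -(q ^ ((N:ℝ)/2) * Real.sqrt (qn 2) * (Real.sqrt (qn ((N:ℝ)+2)))⁻¹)
        * mul_inv_cancel₀ s1
    exact_mod_cast hXY
  | succ n ih =>
    intro hle
    have hnN : n < N := hle
    have h1 := hrec (n+1) (by omega) hle
    simp only [Nat.add_sub_cancel] at h1
    rw [ih (by omega), hα (n+1) hle] at h1
    push_cast at h1 ⊢
    set x : ℝ := (n : ℝ) with hx
    have hx0 : (0:ℝ) ≤ x := Nat.cast_nonneg n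
    have hxN : x + 1 ≤ (N:ℝ) := by rw [hx]; exact_mod_cast hle
    have ha : 0 < qn (x+1) := hpos _ (by linarith)
    have hd : 0 < qn (x+2) := hpos _ (by linarith)
    have hb : 0 < qn ((N:ℝ) - x) := hpos _ (by linarith)
    have hc : 0 < qn ((N:ℝ) - x + 1) := hpos _ (by linarith)
    have hid : Real.sqrt (qn (x+1) * qn ((N:ℝ) - (x+1) + 1))
          * (q ^ ((N:ℝ)/2 - x) * Real.sqrt (qn (x+1) * qn ((N:ℝ) - x + 1)) * Real.sqrt (qn 2)
            * (Real.sqrt (qn ((N:ℝ)+1) * qn ((N:ℝ)+2)))⁻¹)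
        + Real.sqrt (qn 2) * q ^ ((N:ℝ)/2 - (x+1))
          * (q ^ (-(x+1)) * Real.sqrt (qn ((N:ℝ) - (x+1) + 1) * qn ((N:ℝ) - (x+1) + 2))
            * (Real.sqrt (qn ((N:ℝ)+1) * qn ((N:ℝ)+2)))⁻¹)
        = Real.sqrt (qn (x+1+1) * qn ((N:ℝ) - (x+1) + 2))
          * (q ^ ((N:ℝ)/2 - (x+1)) * Real.sqrt (qn (x+1+1) * qn ((N:ℝ) - (x+1) + 1))
            * Real.sqrt (qn 2) * (Real.sqrt (qn ((N:ℝ)+1) * qn ((N:ℝ)+2)))⁻¹) := by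
      rw [show (x+1+1 : ℝ) = x+2 by ring, show ((N:ℝ) - (x+1) + 2) = (N:ℝ) - x + 1 by ring,
        show ((N:ℝ) - (x+1) + 1) = (N:ℝ) - x by ring]
      have e1 := hsq (qn (x+1)) (qn ((N:ℝ) - x)) (qn ((N:ℝ) - x + 1)) ha.le hb.le
      have e2 := hsq (qn (x+2)) (qn ((N:ℝ) - x + 1)) (qn ((N:ℝ) - x)) hd.le hc.le
      rw [mul_comm (qn ((N:ℝ) - x + 1)) (qn ((N:ℝ) - x))] at e2
      have e3 := hkey (x+1)
      rw [show (x+1+1 : ℝ) = x+2 by ring] at e3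
      rw [show ((N:ℝ)/2 - x) = ((N:ℝ)/2 - (x+1)) + 1 by ring, Real.rpow_add hq0,
        Real.rpow_one]
      linear_combination
        (q ^ ((N:ℝ)/2 - (x+1)) * q * Real.sqrt (qn 2)
            * (Real.sqrt (qn ((N:ℝ)+1) * qn ((N:ℝ)+2)))⁻¹) * e1
        - (q ^ ((N:ℝ)/2 - (x+1)) * Real.sqrt (qn 2)
            * (Real.sqrt (qn ((N:ℝ)+1) * qn ((N:ℝ)+2)))⁻¹) * e2
        - (q ^ ((N:ℝ)/2 - (x+1)) * Real.sqrt (qn 2)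
            * (Real.sqrt (qn ((N:ℝ)+1) * qn ((N:ℝ)+2)))⁻¹
            * Real.sqrt (qn ((N:ℝ) - x) * qn ((N:ℝ) - x + 1))) * e3
    have hA : (0:ℝ) < Real.sqrt (qn (x+1+1) * qn ((N:ℝ) - (x+1) + 2)) := by
      apply Real.sqrt_pos.mpr
      exact mul_pos (hpos _ (by linarith)) (hpos _ (by linarith))
    have hAC : ((Real.sqrt (qn (x+1+1) * qn ((N:ℝ) - (x+1) + 2)) : ℝ) : ℂ) ≠ 0 :=
      Complex.ofReal_ne_zero.mpr hA.ne'
    have hidC := congrArg (Complex.ofReal) hid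
    push_cast at hidC
    refine mul_left_cancel₀ hAC ?_
    rw [h1]
    linear_combination (α 0) * hidC
end
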